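/- arXiv:2104.10372 — 6 statements merged into one kernel-verified Lean document; each statement's English description precedes it below -/
import Mathlib

section
/- For every N ≥ 1, all real a, b, and every u ∈ C_0^∞(ℝ^N\{0}): (∫ |u|²/|x|^{2a} dx)·(∫ |x·∇u|²/|x|^{2b+2} dx) ≥ ((N−(a+b+1))²/4)·(∫ |u|²/|x|^{a+b+1} dx)². -/
open MeasureTheory Real Filter
open scoped Topology

private lemma my_cs {α : Type*} [MeasurableSpace α] (μ : Measure α) (f g : α → ℝ)
    (hf : Integrable (fun x => f x ^ 2) μ) (hg : Integrable (fun x => g x ^ 2) μ)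
    (hfg : Integrable (fun x => f x * g x) μ) :
    (∫ x, f x * g x ∂μ) ^ 2 ≤ (∫ x, f x ^ 2 ∂μ) * (∫ x, g x ^ 2 ∂μ) := by
  have key : ∀ t : ℝ,
      0 ≤ (∫ x, g x ^ 2 ∂μ) * (t * t) + (2 * ∫ x, f x * g x ∂μ) * t + ∫ x, f x ^ 2 ∂μ := by
    intro t
    have h2 : 0 ≤ ∫ x, (t ^ 2 * g x ^ 2 + 2 * t * (f x * g x) + f x ^ 2) ∂μ := by
      apply integral_nonneg
      intro x
      simp only [Pi.zero_apply]
      nlinarith [sq_nonneg (t * g x + f x)]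
    have i1 : Integrable (fun x => t ^ 2 * g x ^ 2 + 2 * t * (f x * g x)) μ := by
      exact (hg.const_mul (t ^ 2)).add (hfg.const_mul (2 * t))
    have e1 : ∫ x, (t ^ 2 * g x ^ 2 + 2 * t * (f x * g x) + f x ^ 2) ∂μ
        = t ^ 2 * (∫ x, g x ^ 2 ∂μ) + 2 * t * (∫ x, f x * g x ∂μ) + ∫ x, f x ^ 2 ∂μ := by
      rw [integral_add i1 hf, integral_add (hg.const_mul (t ^ 2)) (hfg.const_mul (2 * t)),
        integral_const_mul, integral_const_mul]
    rw [e1] at h2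
    nlinarith [h2]
  have h := discrim_le_zero key
  rw [discrim] at h
  nlinarith [h]

private lemma my_div (n : ℕ) (φ : EuclideanSpace ℝ (Fin (n + 1)) → ℝ)
    (hφ : ContDiff ℝ (⊤ : ℕ∞) φ) (hc : HasCompactSupport φ) :
    ∫ x : EuclideanSpace ℝ (Fin (n + 1)), (fderiv ℝ φ x x + (n + 1 : ℝ) * φ x) = 0 := by
  classical
  set L : (Fin (n + 1) → ℝ) ≃L[ℝ] EuclideanSpace ℝ (Fin (n + 1)) :=
    (PiLp.continuousLinearEquiv 2 ℝ (fun _ : Fin (n + 1) => ℝ)).symm with hL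
  have hDφ : Continuous (fderiv ℝ φ) := hφ.continuous_fderiv (by simp)
  have hφc : Continuous φ := hφ.continuous
  obtain ⟨R, hR0, hRs⟩ : ∃ R, 0 < R ∧ tsupport φ ⊆ Metric.ball 0 R := by
    obtain ⟨r, hr, hrs⟩ := hc.isCompact.isBounded.subset_ball_lt 0 0
    exact ⟨r, hr, hrs⟩
  have hout : ∀ x : EuclideanSpace ℝ (Fin (n + 1)), R ≤ ‖x‖ → φ x = 0 ∧ fderiv ℝ φ x = 0 := by
    intro x hx
    have hxn : x ∉ tsupport φ := by
      intro hmem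
      have := hRs hmem
      rw [Metric.mem_ball, dist_zero_right] at this
      linarith
    refine ⟨image_eq_zero_of_notMem_tsupport hxn, ?_⟩
    by_contra h
    exact hxn (support_fderiv_subset ℝ (Function.mem_support.mpr h))
  have habs : ∀ (x : EuclideanSpace ℝ (Fin (n + 1))) (i : Fin (n + 1)), |x i| ≤ ‖x‖ := by
    intro x i
    rw [EuclideanSpace.norm_eq, ← Real.sqrt_sq_eq_abs]
    apply Real.sqrt_le_sqrt
    calc x i ^ 2 = ‖x i‖ ^ 2 := by rw [Real.norm_eq_abs, sq_abs]
    _ ≤ ∑ j, ‖x j‖ ^ 2 := Finset.single_le_sum (f := fun j => ‖x j‖ ^ 2)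
        (fun j _ => sq_nonneg _) (Finset.mem_univ i)
  set f : Fin (n + 1) → (Fin (n + 1) → ℝ) → ℝ := fun i y => φ (L y) * y i with hf_def
  set f' : Fin (n + 1) → (Fin (n + 1) → ℝ) → (Fin (n + 1) → ℝ) →L[ℝ] ℝ := fun i y =>
    φ (L y) • ContinuousLinearMap.proj i +
      y i • ((fderiv ℝ φ (L y)).comp
        (L : (Fin (n + 1) → ℝ) →L[ℝ] EuclideanSpace ℝ (Fin (n + 1)))) with hf'_def
  have hasF : ∀ (y : Fin (n + 1) → ℝ) (i : Fin (n + 1)), HasFDerivAt (f i) (f' i y) y := by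
    intro y i
    have h1 : HasFDerivAt (fun y : Fin (n + 1) → ℝ => φ (L y))
        ((fderiv ℝ φ (L y)).comp
          (L : (Fin (n + 1) → ℝ) →L[ℝ] EuclideanSpace ℝ (Fin (n + 1)))) y :=
      (((hφ.differentiable (by simp)) (L y)).hasFDerivAt).comp y L.hasFDerivAt
    have h2 : HasFDerivAt (fun y : Fin (n + 1) → ℝ => y i)
        (ContinuousLinearMap.proj i : (Fin (n + 1) → ℝ) →L[ℝ] ℝ) y :=
      (ContinuousLinearMap.proj i : (Fin (n + 1) → ℝ) →L[ℝ] ℝ).hasFDerivAt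
    exact h1.mul h2
  have hsum : ∀ y : Fin (n + 1) → ℝ,
      (∑ i, f' i y (Pi.single i 1)) = fderiv ℝ φ (L y) (L y) + (n + 1 : ℝ) * φ (L y) := by
    intro y
    have hterm : ∀ i, f' i y (Pi.single i 1)
        = φ (L y) + y i * fderiv ℝ φ (L y) (L (Pi.single i 1)) := by
      intro i
      simp [hf'_def, ContinuousLinearMap.proj_apply, Pi.single_eq_same]
    rw [Finset.sum_congr rfl fun i _ => hterm i, Finset.sum_add_distrib]
    have h1 : (∑ _i : Fin (n + 1), φ (L y)) = (n + 1 : ℝ) * φ (L y) := by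
      rw [Finset.sum_const, Finset.card_univ, Fintype.card_fin, nsmul_eq_mul]
      push_cast; ring
    have h2 : (∑ i : Fin (n + 1), y i * fderiv ℝ φ (L y) (L (Pi.single i 1)))
        = fderiv ℝ φ (L y) (L y) := by
      have e1 : ∀ i : Fin (n + 1), y i * fderiv ℝ φ (L y) (L (Pi.single i 1))
          = fderiv ℝ φ (L y) (L (Pi.single i (y i))) := by
        intro i
        have : (Pi.single i (y i) : Fin (n + 1) → ℝ) = y i • (Pi.single i (1:ℝ) : Fin (n + 1) → ℝ) := by
          funext j
          by_cases h : j = i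
          · subst h; simp
          · simp [Pi.single_apply, h]
        rw [this, _root_.map_smul, _root_.map_smul, smul_eq_mul]
      rw [Finset.sum_congr rfl fun i _ => e1 i]
      have e2 := (map_sum ((fderiv ℝ φ (L y)).comp
          (L : (Fin (n + 1) → ℝ) →L[ℝ] EuclideanSpace ℝ (Fin (n + 1))))
          (fun i => (Pi.single i (y i) : Fin (n + 1) → ℝ)) Finset.univ).symm
      simp only [ContinuousLinearMap.coe_comp', Function.comp_apply,
        ContinuousLinearEquiv.coe_coe] at e2
      rw [e2, Finset.univ_sum_single]
    rw [h1, h2]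
    ring
  have hLcoord : ∀ (y : Fin (n + 1) → ℝ) (i : Fin (n + 1)), (L y) i = y i := fun y i => rfl
  have hface : ∀ (i : Fin (n + 1)) (c : ℝ) (x : Fin n → ℝ), |c| = R →
      f i (i.insertNth c x) = 0 := by
    intro i c x hcR
    have h2 : R ≤ ‖L (i.insertNth c x)‖ := by
      have h3 := habs (L (i.insertNth c x)) i
      rw [hLcoord] at h3
      simpa [hcR] using h3
    show φ (L (i.insertNth c x)) * (i.insertNth c x : Fin (n + 1) → ℝ) i = 0
    rw [(hout _ h2).1, zero_mul]
  have hdivcont : Continuous fun y : Fin (n + 1) → ℝ => ∑ i, f' i y (Pi.single i 1) := by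
    have e : (fun y : Fin (n + 1) → ℝ => ∑ i, f' i y (Pi.single i 1))
        = fun y => fderiv ℝ φ (L y) (L y) + (n + 1 : ℝ) * φ (L y) := funext hsum
    rw [e]
    exact ((hDφ.comp L.continuous).clm_apply L.continuous).add
      (continuous_const.mul (hφc.comp L.continuous))
  have H := integral_divergence_of_hasFDerivAt_off_countable'
      (fun _ : Fin (n + 1) => -R) (fun _ : Fin (n + 1) => R)
      (fun i => by simp; linarith)
      f f' ∅ Set.countable_empty
      (fun i => ((hφc.comp L.continuous).mul (continuous_apply i)).continuousOn)
      (fun x _ i => hasF x i)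
      (hdivcont.continuousOn.integrableOn_compact isCompact_Icc)
  have H0 : (∫ x in Set.Icc (fun _ : Fin (n + 1) => -R) (fun _ : Fin (n + 1) => R),
      ∑ i, f' i x (Pi.single i 1)) = 0 := by
    rw [H]
    refine Finset.sum_eq_zero fun i _ => ?_
    have hz : ∀ c : ℝ, |c| = R →
        (∫ x in Set.Icc ((fun _ : Fin (n + 1) => -R) ∘ i.succAbove)
          ((fun _ : Fin (n + 1) => R) ∘ i.succAbove), f i (i.insertNth c x)) = 0 := by
      intro c hc
      have : ∀ x : Fin n → ℝ, f i (i.insertNth c x) = 0 := fun x => hface i c x hc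
      calc (∫ x in Set.Icc ((fun _ : Fin (n + 1) => -R) ∘ i.succAbove)
            ((fun _ : Fin (n + 1) => R) ∘ i.succAbove), f i (i.insertNth c x))
          = ∫ _x in Set.Icc ((fun _ : Fin (n + 1) => -R) ∘ i.succAbove)
            ((fun _ : Fin (n + 1) => R) ∘ i.succAbove), (0 : ℝ) :=
            integral_congr_ae (Filter.Eventually.of_forall fun x => this x)
        _ = 0 := by simp
    rw [hz R (abs_of_pos hR0), hz (-R) (by rw [abs_neg, abs_of_pos hR0]), sub_zero]
  have hcompl : ∀ y ∉ Set.Icc (fun _ : Fin (n + 1) => -R) (fun _ : Fin (n + 1) => R),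
      (∑ i, f' i y (Pi.single i 1)) = 0 := by
    intro y hy
    rw [hsum y]
    have hRy : R ≤ ‖L y‖ := by
      by_contra hlt
      push_neg at hlt
      apply hy
      constructor
      · intro j
        have h3 := habs (L y) j
        rw [hLcoord] at h3
        have := (abs_le.mp (h3.trans hlt.le)).1
        simpa using this
      · intro j
        have h3 := habs (L y) j
        rw [hLcoord] at h3
        exact (abs_le.mp (h3.trans hlt.le)).2
    obtain ⟨h1, h2⟩ := hout (L y) hRy
    rw [h1, h2]
    simp
  have Huniv : (∫ y : Fin (n + 1) → ℝ, ∑ i, f' i y (Pi.single i 1)) = 0 := by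
    rw [← setIntegral_eq_integral_of_forall_compl_eq_zero hcompl]
    exact H0
  have htrans : (∫ y : Fin (n + 1) → ℝ, (fderiv ℝ φ (L y) (L y) + (n + 1 : ℝ) * φ (L y)))
      = ∫ x : EuclideanSpace ℝ (Fin (n + 1)), (fderiv ℝ φ x x + (n + 1 : ℝ) * φ x) := by
    have hmp := (EuclideanSpace.volume_preserving_symm_measurableEquiv_toLp (ι := Fin (n + 1))).symm
    exact hmp.integral_comp'
      (fun x => fderiv ℝ φ x x + (n + 1 : ℝ) * φ x)
  calc (∫ x : EuclideanSpace ℝ (Fin (n + 1)), (fderiv ℝ φ x x + (n + 1 : ℝ) * φ x))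
      = ∫ y : Fin (n + 1) → ℝ, (fderiv ℝ φ (L y) (L y) + (n + 1 : ℝ) * φ (L y)) := htrans.symm
    _ = ∫ y : Fin (n + 1) → ℝ, ∑ i, f' i y (Pi.single i 1) :=
        integral_congr_ae (Filter.Eventually.of_forall fun y => (hsum y).symm)
    _ = 0 := Huniv

set_option maxHeartbeats 2000000 in
theorem stmt_3 (N : ℕ) (hN : 1 ≤ N) (a b : ℝ)
    (u : EuclideanSpace ℝ (Fin N) → ℝ)
    (hu : ContDiff ℝ (⊤ : ℕ∞) u) (hcs : HasCompactSupport u)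
    (h0 : (0 : EuclideanSpace ℝ (Fin N)) ∉ tsupport u) :
    (∫ x : EuclideanSpace ℝ (Fin N), (u x) ^ 2 / ‖x‖ ^ (2 * a)) *
      (∫ x : EuclideanSpace ℝ (Fin N),
        (inner ℝ x (gradient u x) : ℝ) ^ 2 / ‖x‖ ^ (2 * b + 2))
      ≥ ((N : ℝ) - (a + b + 1)) ^ 2 / 4 *
        (∫ x : EuclideanSpace ℝ (Fin N), (u x) ^ 2 / ‖x‖ ^ (a + b + 1)) ^ 2 := by
  obtain ⟨n, rfl⟩ : ∃ n, N = n + 1 := ⟨N - 1, (Nat.succ_pred_eq_of_pos hN).symm⟩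
  have hud : Differentiable ℝ u := hu.differentiable (by simp)
  have hDucont : Continuous fun x => fderiv ℝ u x := hu.continuous_fderiv (by simp)
  have hu0 : ∀ x ∉ tsupport u, u x = 0 := fun x hx => image_eq_zero_of_notMem_tsupport hx
  have hDu0 : ∀ x ∉ tsupport u, fderiv ℝ u x = 0 := by
    intro x hx
    by_contra h
    exact hx (support_fderiv_subset ℝ (Function.mem_support.mpr h))
  set c := a + b + 1 with hc_def
  set w : ℝ → EuclideanSpace ℝ (Fin (n+1)) → ℝ := fun t x => (‖x‖ ^ 2) ^ (-t / 2) with hw_def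
  have hx0 : ∀ x ∈ tsupport u, x ≠ (0 : EuclideanSpace ℝ (Fin (n+1))) := by
    intro x hx h; exact h0 (h ▸ hx)
  have hxne : ∀ x : EuclideanSpace ℝ (Fin (n+1)), u x ≠ 0 → x ≠ 0 := by
    intro x hux h
    exact hux (by rw [h]; exact hu0 0 h0)
  have hwpos_base : ∀ (x : EuclideanSpace ℝ (Fin (n+1))), x ≠ 0 → (0:ℝ) < ‖x‖ ^ 2 := by
    intro x hx
    have : ‖x‖ ≠ 0 := norm_ne_zero_iff.mpr hx
    positivity
  have hwmul : ∀ (s t : ℝ) (x : EuclideanSpace ℝ (Fin (n+1))), x ≠ 0 →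
      w s x * w t x = w (s + t) x := by
    intro s t x hx
    show ((‖x‖ ^ 2 : ℝ) ^ (-s / 2)) * ((‖x‖ ^ 2 : ℝ) ^ (-t / 2)) = (‖x‖ ^ 2 : ℝ) ^ (-(s + t) / 2)
    rw [← Real.rpow_add (hwpos_base x hx)]
    congr 1
    ring
  have hwval : ∀ (s : ℝ) (x : EuclideanSpace ℝ (Fin (n+1))), x ≠ 0 →
      w s x = (‖x‖ ^ s)⁻¹ := by
    intro s x hx
    have h1 : (0:ℝ) < ‖x‖ := norm_pos_iff.mpr hx
    show (‖x‖ ^ 2 : ℝ) ^ (-s / 2) = (‖x‖ ^ s)⁻¹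
    rw [← Real.rpow_natCast ‖x‖ 2, ← Real.rpow_mul h1.le, ← Real.rpow_neg h1.le]
    congr 1
    push_cast
    ring
  have hwsq : ∀ (s : ℝ) (x : EuclideanSpace ℝ (Fin (n+1))), x ≠ 0 →
      (w s x) ^ 2 = w (2 * s) x := by
    intro s x hx
    rw [sq, hwmul s s x hx]
    congr 1
    ring
  have hwcont : ∀ (t : ℝ) (x : EuclideanSpace ℝ (Fin (n+1))), x ≠ 0 →
      ContinuousAt (w t) x := by
    intro t x hx
    apply ContinuousAt.rpow_const
    · exact (contDiff_norm_sq ℝ (E := EuclideanSpace ℝ (Fin (n+1))) (n := (⊤ : ℕ∞))).continuous.continuousAt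
    · exact Or.inl (hwpos_base x hx).ne'
  -- integrability helper
  have haux : ∀ (h : EuclideanSpace ℝ (Fin (n+1)) → ℝ) (t : ℝ), Continuous h →
      (∀ x ∉ tsupport u, h x = 0) → Integrable (fun x => h x * w t x) := by
    intro h t hcont hz
    apply Continuous.integrable_of_hasCompactSupport
    · rw [continuous_iff_continuousAt]
      intro x
      by_cases hx : x = 0
      · subst hx
        have hev : (fun x => h x * w t x) =ᶠ[𝓝 (0 : EuclideanSpace ℝ (Fin (n+1)))]
            (fun _ => (0:ℝ)) := by
          filter_upwards [(isClosed_tsupport u).isOpen_compl.mem_nhds h0] with y hy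
          simp [hz y hy]
        exact ContinuousAt.congr continuousAt_const hev.symm
      · exact (hcont.continuousAt).mul (hwcont t x hx)
    · apply HasCompactSupport.intro hcs
      intro x hx
      simp [hz x hx]
  set φ : EuclideanSpace ℝ (Fin (n+1)) → ℝ := fun x => u x ^ 2 * w c x with hφ_def
  have hφdiff : ContDiff ℝ (⊤ : ℕ∞) φ := by
    rw [contDiff_iff_contDiffAt]
    intro x
    by_cases hx : x ∈ tsupport u
    · have h1 : ContDiffAt ℝ (⊤ : ℕ∞) (fun y => u y ^ 2) x := by
        have := (hu.mul hu).contDiffAt (x := x)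
        have e : (fun y => u y * u y) = fun y => u y ^ 2 := by funext y; ring
        rwa [e] at this
      have h2 : ContDiffAt ℝ (⊤ : ℕ∞) (w c) x := by
        apply ContDiffAt.rpow_const_of_ne
        · exact (contDiff_norm_sq ℝ (E := EuclideanSpace ℝ (Fin (n+1))) (n := (⊤ : ℕ∞))).contDiffAt
        · exact (hwpos_base x (hx0 x hx)).ne'
      exact h1.mul h2
    · have hev : φ =ᶠ[𝓝 x] (fun _ => (0:ℝ)) := by
        filter_upwards [(isClosed_tsupport u).isOpen_compl.mem_nhds hx] with y hy
        simp [hφ_def, hu0 y hy]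
      exact (contDiffAt_const (c := (0:ℝ))).congr_of_eventuallyEq hev
  have hφsupp : HasCompactSupport φ :=
    HasCompactSupport.intro hcs (fun x hx => by simp [hφ_def, hu0 x hx])
  -- pointwise derivative identity
  have keyd : ∀ x, fderiv ℝ φ x x = (2 * u x * fderiv ℝ u x x - c * u x ^ 2) * w c x := by
    intro x
    by_cases hx : x ∈ tsupport u
    · have hxne0 : x ≠ 0 := hx0 x hx
      have hn2 := hwpos_base x hxne0
      have hns : HasFDerivAt (fun y : EuclideanSpace ℝ (Fin (n+1)) => ‖y‖ ^ 2)
          (2 • (innerSL ℝ x)) x := (hasStrictFDerivAt_norm_sq x).hasFDerivAt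
      have hv : HasFDerivAt (w c)
          (((-c / 2) * (‖x‖ ^ 2) ^ (-c / 2 - 1)) • (2 • (innerSL ℝ x))) x :=
        hns.rpow_const (Or.inl hn2.ne')
      have hu2 : HasFDerivAt (fun y => u y ^ 2)
          (((2:ℝ) * u x) • fderiv ℝ u x) x := by
        have h := (hud x).hasFDerivAt
        have h2 : HasFDerivAt (fun y => u y * u y) (u x • fderiv ℝ u x + u x • fderiv ℝ u x) x := h.mul h
        have e : (fun y => u y * u y) = fun y => u y ^ 2 := by funext y; ring
        rw [e] at h2
        convert h2 using 1
        rw [two_mul, add_smul]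
      have hφx : HasFDerivAt φ
          (u x ^ 2 • (((-c / 2) * (‖x‖ ^ 2) ^ (-c / 2 - 1)) • (2 • (innerSL ℝ x)))
            + w c x • (((2:ℝ) * u x) • fderiv ℝ u x)) x := hu2.mul hv
      rw [hφx.fderiv]
      have hrs : (‖x‖ ^ 2 : ℝ) ^ (-c / 2 - 1) * ‖x‖ ^ 2 = w c x := by
        calc (‖x‖ ^ 2 : ℝ) ^ (-c / 2 - 1) * ‖x‖ ^ 2
            = (‖x‖ ^ 2 : ℝ) ^ (-c / 2 - 1) * (‖x‖ ^ 2 : ℝ) ^ (1:ℝ) := by rw [Real.rpow_one]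
          _ = (‖x‖ ^ 2 : ℝ) ^ (-c / 2 - 1 + 1) := (Real.rpow_add hn2 _ _).symm
          _ = w c x := by norm_num; rfl
      simp only [ContinuousLinearMap.add_apply, ContinuousLinearMap.smul_apply, smul_eq_mul,
        innerSL_apply_apply, real_inner_self_eq_norm_sq, pow_one]
      linear_combination (-(c : ℝ) * u x ^ 2) * hrs
    · have hev : φ =ᶠ[𝓝 x] (fun _ => (0:ℝ)) := by
        filter_upwards [(isClosed_tsupport u).isOpen_compl.mem_nhds hx] with y hy
        simp [hφ_def, hu0 y hy]
      rw [hev.fderiv_eq, fderiv_fun_const]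
      simp [hu0 x hx, hDu0 x hx]
  -- integrable functions
  have hDuxx_cont : Continuous fun x : EuclideanSpace ℝ (Fin (n+1)) => fderiv ℝ u x x :=
    hDucont.clm_apply continuous_id
  have int1 : Integrable (fun x => u x ^ 2 * w (2 * a) x) :=
    haux _ _ (hu.continuous.mul hu.continuous |>.congr (fun x => by simp only [Pi.mul_apply]; ring))
      (fun x hx => by simp [hu0 x hx])
  have int2 : Integrable (fun x => (fderiv ℝ u x x) ^ 2 * w (2 * b + 2) x) :=
    haux _ _ ((hDuxx_cont.mul hDuxx_cont).congr (fun x => by simp only [Pi.mul_apply]; ring))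
      (fun x hx => by simp [hDu0 x hx])
  have int3 : Integrable φ :=
    haux _ _ (hu.continuous.mul hu.continuous |>.congr (fun x => by simp only [Pi.mul_apply]; ring))
      (fun x hx => by simp [hu0 x hx])
  have int4 : Integrable (fun x => (u x * fderiv ℝ u x x) * w c x) :=
    haux _ _ (hu.continuous.mul hDuxx_cont) (fun x hx => by simp [hu0 x hx])
  have int5 : Integrable (fun x => fderiv ℝ φ x x) := by
    apply Continuous.integrable_of_hasCompactSupport
    · exact (hφdiff.continuous_fderiv (by simp)).clm_apply continuous_id
    · apply HasCompactSupport.intro hφsupp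
      intro x hx
      have : fderiv ℝ φ x = 0 := by
        by_contra h
        exact hx (support_fderiv_subset ℝ (Function.mem_support.mpr h))
      simp [this]
  -- divergence identity
  have hdiv0 := my_div n φ hφdiff hφsupp
  rw [integral_add int5 (int3.const_mul ((n:ℝ) + 1)), integral_const_mul] at hdiv0
  set B := ∫ x, (u x * fderiv ℝ u x x) * w c x with hB_def
  set I3 := ∫ x, φ x with hI3_def
  have e1 : (∫ x, fderiv ℝ φ x x) = 2 * B - c * I3 := by
    have step : (∫ x, fderiv ℝ φ x x)
        = ∫ x, (2 * ((u x * fderiv ℝ u x x) * w c x) - c * φ x) := by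
      apply integral_congr_ae
      filter_upwards with x
      rw [keyd x, hφ_def]
      ring
    rw [step, integral_sub (int4.const_mul 2) (int3.const_mul c),
      integral_const_mul, integral_const_mul]
  have hident : 2 * B = (c - ((n:ℝ) + 1)) * I3 := by
    rw [e1] at hdiv0
    linarith
  -- Cauchy-Schwarz
  set F : EuclideanSpace ℝ (Fin (n+1)) → ℝ := fun x => u x * w a x with hF_def
  set G : EuclideanSpace ℝ (Fin (n+1)) → ℝ := fun x => fderiv ℝ u x x * w (b + 1) x with hG_def
  have pF : ∀ x, F x ^ 2 = u x ^ 2 * w (2 * a) x := by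
    intro x
    by_cases hux : u x = 0
    · simp [hF_def, hux]
    · have hx := hxne x hux
      rw [hF_def]
      show (u x * w a x) ^ 2 = _
      rw [mul_pow, hwsq a x hx]
  have pG : ∀ x, G x ^ 2 = (fderiv ℝ u x x) ^ 2 * w (2 * b + 2) x := by
    intro x
    by_cases hdx : fderiv ℝ u x x = 0
    · simp [hG_def, hdx]
    · have hx : x ≠ (0 : EuclideanSpace ℝ (Fin (n+1))) := by
        intro h
        apply hdx
        rw [h, hDu0 0 h0]
        simp
      rw [hG_def]
      show (fderiv ℝ u x x * w (b + 1) x) ^ 2 = _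
      rw [mul_pow, hwsq (b + 1) x hx]
      ring_nf
  have pFG : ∀ x, F x * G x = (u x * fderiv ℝ u x x) * w c x := by
    intro x
    by_cases hux : u x = 0
    · simp [hF_def, hux]
    · have hx := hxne x hux
      rw [hF_def, hG_def]
      show (u x * w a x) * (fderiv ℝ u x x * w (b + 1) x) = _
      rw [hc_def]
      calc (u x * w a x) * (fderiv ℝ u x x * w (b + 1) x)
          = (u x * fderiv ℝ u x x) * (w a x * w (b + 1) x) := by ring
        _ = (u x * fderiv ℝ u x x) * w (a + (b + 1)) x := by rw [hwmul a (b+1) x hx]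
        _ = (u x * fderiv ℝ u x x) * w (a + b + 1) x := by ring_nf
  have intF2 : Integrable (fun x => F x ^ 2) :=
    int1.congr (Filter.Eventually.of_forall fun x => (pF x).symm)
  have intG2 : Integrable (fun x => G x ^ 2) :=
    int2.congr (Filter.Eventually.of_forall fun x => (pG x).symm)
  have intFG : Integrable (fun x => F x * G x) :=
    int4.congr (Filter.Eventually.of_forall fun x => (pFG x).symm)
  have hCS := my_cs volume F G intF2 intG2 intFG
  have hBeq : (∫ x, F x * G x) = B := by
    rw [hB_def]
    exact integral_congr_ae (Filter.Eventually.of_forall fun x => pFG x)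
  rw [hBeq] at hCS
  -- convert statement integrals
  have eA : (∫ x : EuclideanSpace ℝ (Fin (n+1)), (u x) ^ 2 / ‖x‖ ^ (2 * a))
      = ∫ x, F x ^ 2 := by
    apply integral_congr_ae
    filter_upwards with x
    by_cases hux : u x = 0
    · simp [hux, hF_def]
    · have hx := hxne x hux
      rw [pF x, hwval (2 * a) x hx, div_eq_mul_inv]
  have eC : (∫ x : EuclideanSpace ℝ (Fin (n+1)),
      (inner ℝ x (gradient u x) : ℝ) ^ 2 / ‖x‖ ^ (2 * b + 2)) = ∫ x, G x ^ 2 := by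
    apply integral_congr_ae
    filter_upwards with x
    have hgrad : (inner ℝ x (gradient u x) : ℝ) = fderiv ℝ u x x := by
      have h := (hud x).hasGradientAt
      rw [hasGradientAt_iff_hasFDerivAt] at h
      rw [real_inner_comm, h.fderiv, InnerProductSpace.toDual_apply_apply]
    rw [hgrad]
    by_cases hdx : fderiv ℝ u x x = 0
    · simp [hdx, hG_def]
    · have hx : x ≠ (0 : EuclideanSpace ℝ (Fin (n+1))) := by
        intro h
        apply hdx
        rw [h, hDu0 0 h0]
        simp
      rw [pG x, hwval (2 * b + 2) x hx, div_eq_mul_inv]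
  have eI3 : (∫ x : EuclideanSpace ℝ (Fin (n+1)), (u x) ^ 2 / ‖x‖ ^ c) = I3 := by
    rw [hI3_def]
    apply integral_congr_ae
    filter_upwards with x
    by_cases hux : u x = 0
    · simp [hux, hφ_def]
    · have hx := hxne x hux
      rw [hφ_def]
      show u x ^ 2 / ‖x‖ ^ c = u x ^ 2 * w c x
      rw [hwval c x hx, div_eq_mul_inv]
  rw [ge_iff_le, eA, eC, eI3]
  have hcast : ((n + 1 : ℕ) : ℝ) = (n : ℝ) + 1 := by push_cast; ring
  rw [hcast]
  calc ((n : ℝ) + 1 - c) ^ 2 / 4 * I3 ^ 2 = ((c - ((n : ℝ) + 1)) * I3) ^ 2 / 4 := by ring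
    _ = (2 * B) ^ 2 / 4 := by rw [hident]
    _ = B ^ 2 := by ring
    _ ≤ (∫ x, F x ^ 2) * ∫ x, G x ^ 2 := hCS
end

section
/- For every N ≥ 1, all real a, b, and every u ∈ C_0^∞(ℝ^N\{0}): (∫ |u|²/|x|^{2a} dx)·(∫ |x·∇u|²/|x|^{2b+2} dx) ≥ ((N−(3b−a+3))²/4)·(∫ |u|²/|x|^{a+b+1} dx)². -/
open MeasureTheory Real Filter
open scoped Topology

open scoped ContDiff
set_option maxHeartbeats 1600000

section aux

lemma cs_integral {α : Type*} [MeasurableSpace α] (μ : Measure α) (F H : α → ℝ)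
    (hF2 : Integrable (fun x => F x ^ 2) μ) (hH2 : Integrable (fun x => H x ^ 2) μ)
    (hFH : Integrable (fun x => F x * H x) μ) :
    (∫ x, F x * H x ∂μ) ^ 2 ≤ (∫ x, F x ^ 2 ∂μ) * (∫ x, H x ^ 2 ∂μ) := by
  set A := ∫ x, F x ^ 2 ∂μ with hA
  set B := ∫ x, F x * H x ∂μ with hB
  set C := ∫ x, H x ^ 2 ∂μ with hC
  have hA0 : 0 ≤ A := integral_nonneg fun x => sq_nonneg _
  have hC0 : 0 ≤ C := integral_nonneg fun x => sq_nonneg _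
  have key : ∀ p q : ℝ, 0 ≤ p ^ 2 * A - 2 * p * q * B + q ^ 2 * C := by
    intro p q
    have h1 : ∀ x, (p * F x - q * H x) ^ 2
        = (p ^ 2 * F x ^ 2 - 2 * p * q * (F x * H x)) + q ^ 2 * H x ^ 2 := fun x => by ring
    have e1 : ∫ x, ((p ^ 2 * F x ^ 2 - 2 * p * q * (F x * H x)) + q ^ 2 * H x ^ 2) ∂μ
        = (∫ x, (p ^ 2 * F x ^ 2 - 2 * p * q * (F x * H x)) ∂μ) + ∫ x, q ^ 2 * H x ^ 2 ∂μ :=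
      integral_add ((hF2.const_mul _).sub (hFH.const_mul _)) (hH2.const_mul _)
    have e2 : ∫ x, (p ^ 2 * F x ^ 2 - 2 * p * q * (F x * H x)) ∂μ
        = (∫ x, p ^ 2 * F x ^ 2 ∂μ) - ∫ x, 2 * p * q * (F x * H x) ∂μ :=
      integral_sub (hF2.const_mul _) (hFH.const_mul _)
    have h2 : (0:ℝ) ≤ ∫ x, (p * F x - q * H x) ^ 2 ∂μ := integral_nonneg fun x => sq_nonneg _
    calc (0:ℝ) ≤ ∫ x, (p * F x - q * H x) ^ 2 ∂μ := h2
      _ = ∫ x, ((p ^ 2 * F x ^ 2 - 2 * p * q * (F x * H x)) + q ^ 2 * H x ^ 2) ∂μ :=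
          integral_congr_ae (Filter.Eventually.of_forall fun x => h1 x)
      _ = p ^ 2 * A - 2 * p * q * B + q ^ 2 * C := by
          rw [e1, e2, integral_const_mul, integral_const_mul, integral_const_mul]
  rcases eq_or_lt_of_le hA0 with h | h
  · have hB0 : B = 0 := by
      by_contra hB0
      have := key ((C + 1) / (2 * B)) 1
      rw [← h] at this
      have h2 : (2:ℝ) * ((C + 1) / (2 * B)) * 1 * B = C + 1 := by
        field_simp
      nlinarith
    rw [hB0, ← h]
    nlinarith
  · have := key B A
    nlinarith [mul_pos h h]

lemma ibp (N : ℕ) (w F : EuclideanSpace ℝ (Fin N) → ℝ)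
    (hw : ContDiff ℝ ∞ w) (hF : ContDiff ℝ ∞ F) (hFc : HasCompactSupport F) :
    ∫ x : EuclideanSpace ℝ (Fin N), w x * fderiv ℝ F x x
      = -((N:ℝ) * ∫ x : EuclideanSpace ℝ (Fin N), w x * F x)
        - ∫ x : EuclideanSpace ℝ (Fin N), fderiv ℝ w x x * F x := by
  have hone : (∞ : WithTop ℕ∞) ≠ 0 := by simp
  have xdecomp : ∀ x : EuclideanSpace ℝ (Fin N), x = ∑ i, x i • EuclideanSpace.single i (1:ℝ) := by
    intro x
    ext j
    rw [show (∑ i, x i • EuclideanSpace.single i (1:ℝ)) j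
        = ∑ i, (x i • EuclideanSpace.single i (1:ℝ)) j by rw [WithLp.ofLp_sum, Finset.sum_apply]]
    simp [EuclideanSpace.single_apply]
  have hL : ∀ (L : EuclideanSpace ℝ (Fin N) →L[ℝ] ℝ) (x : EuclideanSpace ℝ (Fin N)),
      L x = ∑ i, x i * L (EuclideanSpace.single i 1) := by
    intro L x
    conv_lhs => rw [xdecomp x]
    rw [map_sum]
    simp [smul_eq_mul]
  have compInt : ∀ c g : EuclideanSpace ℝ (Fin N) → ℝ, Continuous c → Continuous g →
      HasCompactSupport g → Integrable (fun x => c x * g x) := fun c g hc hg hgc =>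
    (hc.mul hg).integrable_of_hasCompactSupport hgc.mul_left
  have hwc : Continuous w := hw.continuous
  have hFcont : Continuous F := hF.continuous
  have hwdc : Continuous (fderiv ℝ w) := hw.continuous_fderiv hone
  have hFdc : Continuous (fderiv ℝ F) := hF.continuous_fderiv hone
  have hFd0 : ∀ x, x ∉ tsupport F → fderiv ℝ F x = 0 := fun x hx => by
    by_contra h
    exact hx (support_fderiv_subset ℝ (Function.mem_support.2 h))
  have hFdcs : ∀ v, HasCompactSupport fun x => fderiv ℝ F x v :=
    fun v => HasCompactSupport.intro hFc fun x hx => by rw [hFd0 x hx]; rfl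
  have hdir : ∀ i : Fin N,
      ∫ x : EuclideanSpace ℝ (Fin N), (x i * w x) * fderiv ℝ F x (EuclideanSpace.single i 1)
        = - ∫ x : EuclideanSpace ℝ (Fin N),
            fderiv ℝ (fun y => y i * w y) x (EuclideanSpace.single i 1) * F x := by
    intro i
    have hfdiff : Differentiable ℝ (fun y : EuclideanSpace ℝ (Fin N) => y i * w y) :=
      fun x => ((EuclideanSpace.proj (𝕜 := ℝ) i).differentiableAt).mul ((hw.differentiable hone) x)
    have hfdiffc : Continuous fun x => fderiv ℝ (fun y : EuclideanSpace ℝ (Fin N) => y i * w y) x :=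
      (((EuclideanSpace.proj (𝕜 := ℝ) i).contDiff.mul hw).continuous_fderiv hone)
    exact integral_mul_fderiv_eq_neg_fderiv_mul_of_integrable
      (compInt _ _ (hfdiffc.clm_apply continuous_const) hFcont hFc)
      (compInt _ _ (((EuclideanSpace.proj i).continuous.mul hwc)) (hFdc.clm_apply continuous_const)
        (hFdcs _))
      (compInt _ _ ((EuclideanSpace.proj i).continuous.mul hwc) hFcont hFc)
      (fun x _ => hfdiff x) (fun x _ => hF.differentiable hone x)
  have hfder : ∀ (i : Fin N) (x : EuclideanSpace ℝ (Fin N)),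
      fderiv ℝ (fun y : EuclideanSpace ℝ (Fin N) => y i * w y) x (EuclideanSpace.single i 1)
        = w x + x i * fderiv ℝ w x (EuclideanSpace.single i 1) := by
    intro i x
    have h1 : HasFDerivAt (𝕜 := ℝ) (fun y : EuclideanSpace ℝ (Fin N) => y i)
        (EuclideanSpace.proj i) x := (EuclideanSpace.proj (𝕜 := ℝ) i).hasFDerivAt
    have h2 : HasFDerivAt w (fderiv ℝ w x) x := (hw.differentiable hone x).hasFDerivAt
    have := (h1.mul h2).fderiv
    rw [show (fun y : EuclideanSpace ℝ (Fin N) => y i * w y) = (fun y => y i) * w from rfl, this]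
    simp [EuclideanSpace.single_apply]
    ring
  have step1 : ∀ x : EuclideanSpace ℝ (Fin N), w x * fderiv ℝ F x x
      = ∑ i, (x i * w x) * fderiv ℝ F x (EuclideanSpace.single i 1) := by
    intro x
    rw [hL (fderiv ℝ F x) x, Finset.mul_sum]
    exact Finset.sum_congr rfl fun i _ => by ring
  have int_i : ∀ i : Fin N, Integrable (fun x : EuclideanSpace ℝ (Fin N) =>
      (x i * w x) * fderiv ℝ F x (EuclideanSpace.single i 1)) :=
    fun i => compInt _ _ ((EuclideanSpace.proj i).continuous.mul hwc)
      (hFdc.clm_apply continuous_const) (hFdcs _)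
  have int_i' : ∀ i : Fin N, Integrable (fun x : EuclideanSpace ℝ (Fin N) =>
      fderiv ℝ (fun y => y i * w y) x (EuclideanSpace.single i 1) * F x) := by
    intro i
    have hfdiffc : Continuous fun x => fderiv ℝ (fun y : EuclideanSpace ℝ (Fin N) => y i * w y) x :=
      (((EuclideanSpace.proj (𝕜 := ℝ) i).contDiff.mul hw).continuous_fderiv hone)
    exact compInt _ _ (hfdiffc.clm_apply continuous_const) hFcont hFc
  calc ∫ x : EuclideanSpace ℝ (Fin N), w x * fderiv ℝ F x x
      = ∫ x : EuclideanSpace ℝ (Fin N),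
          ∑ i, (x i * w x) * fderiv ℝ F x (EuclideanSpace.single i 1) :=
        integral_congr_ae (Filter.Eventually.of_forall step1)
    _ = ∑ i, ∫ x : EuclideanSpace ℝ (Fin N),
          (x i * w x) * fderiv ℝ F x (EuclideanSpace.single i 1) :=
        integral_finset_sum _ fun i _ => int_i i
    _ = ∑ i, - ∫ x : EuclideanSpace ℝ (Fin N),
          fderiv ℝ (fun y => y i * w y) x (EuclideanSpace.single i 1) * F x :=
        Finset.sum_congr rfl fun i _ => hdir i
    _ = - ∑ i, ∫ x : EuclideanSpace ℝ (Fin N),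
          fderiv ℝ (fun y => y i * w y) x (EuclideanSpace.single i 1) * F x := by
        rw [Finset.sum_neg_distrib]
    _ = - ∫ x : EuclideanSpace ℝ (Fin N),
          ∑ i, fderiv ℝ (fun y => y i * w y) x (EuclideanSpace.single i 1) * F x := by
        rw [integral_finset_sum _ fun i _ => int_i' i]
    _ = - ∫ x : EuclideanSpace ℝ (Fin N), ((N:ℝ) * w x + fderiv ℝ w x x) * F x := by
        congr 1
        apply integral_congr_ae (Filter.Eventually.of_forall _)
        intro x
        have : ∀ i : Fin N, fderiv ℝ (fun y => y i * w y) x (EuclideanSpace.single i 1) * F x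
            = (w x + x i * fderiv ℝ w x (EuclideanSpace.single i 1)) * F x :=
          fun i => by rw [hfder i x]
        rw [Finset.sum_congr rfl fun i _ => this i]
        rw [show ∑ i : Fin N, (w x + x i * fderiv ℝ w x (EuclideanSpace.single i 1)) * F x
          = ((N:ℝ) * w x + ∑ i : Fin N, x i * fderiv ℝ w x (EuclideanSpace.single i 1)) * F x by
            rw [Finset.sum_congr rfl fun i _ => add_mul _ _ _, Finset.sum_add_distrib,
              Finset.sum_const, Finset.card_univ, ← Finset.sum_mul]
            simp [add_mul]
            ring]
        rw [← hL (fderiv ℝ w x) x]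
    _ = -((N:ℝ) * ∫ x : EuclideanSpace ℝ (Fin N), w x * F x)
        - ∫ x : EuclideanSpace ℝ (Fin N), fderiv ℝ w x x * F x := by
        have i1 : Integrable (fun x : EuclideanSpace ℝ (Fin N) => (N:ℝ) * (w x * F x)) :=
          (compInt _ _ hwc hFcont hFc).const_mul _
        have i2 : Integrable (fun x : EuclideanSpace ℝ (Fin N) => fderiv ℝ w x x * F x) :=
          compInt _ _ (hwdc.clm_apply continuous_id) hFcont hFc
        rw [show (∫ x : EuclideanSpace ℝ (Fin N), ((N:ℝ) * w x + fderiv ℝ w x x) * F x)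
            = ∫ x : EuclideanSpace ℝ (Fin N), ((N:ℝ) * (w x * F x) + fderiv ℝ w x x * F x) from
          integral_congr_ae (Filter.Eventually.of_forall fun x => by ring)]
        rw [integral_add i1 i2, integral_const_mul]
        ring

end aux

theorem stmt_4 (N : ℕ) (hN : 1 ≤ N) (a b : ℝ)
    (u : EuclideanSpace ℝ (Fin N) → ℝ)
    (hu : ContDiff ℝ (⊤ : ℕ∞) u) (hcs : HasCompactSupport u)
    (h0 : (0 : EuclideanSpace ℝ (Fin N)) ∉ tsupport u) :
    (∫ x : EuclideanSpace ℝ (Fin N), (u x) ^ 2 / ‖x‖ ^ (2 * a)) *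
      (∫ x : EuclideanSpace ℝ (Fin N),
        (inner ℝ x (gradient u x) : ℝ) ^ 2 / ‖x‖ ^ (2 * b + 2))
      ≥ ((N : ℝ) - (3 * b - a + 3)) ^ 2 / 4 *
        (∫ x : EuclideanSpace ℝ (Fin N), (u x) ^ 2 / ‖x‖ ^ (a + b + 1)) ^ 2 := by
  have hone : (∞ : WithTop ℕ∞) ≠ 0 := by simp
  have hu' : ContDiff ℝ ∞ u := hu.of_le (by simp)
  -- ### choose ε with ball 0 ε disjoint from the support
  obtain ⟨ε, hε, hball⟩ : ∃ ε > 0, Metric.ball (0 : EuclideanSpace ℝ (Fin N)) ε ⊆ (tsupport u)ᶜ := by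
    have h1 : (tsupport u)ᶜ ∈ 𝓝 (0 : EuclideanSpace ℝ (Fin N)) :=
      ((isClosed_tsupport u).isOpen_compl).mem_nhds h0
    rcases Metric.mem_nhds_iff.1 h1 with ⟨ε, hε, h⟩
    exact ⟨ε, hε, h⟩
  have hsupp_norm : ∀ x ∈ tsupport u, ε ≤ ‖x‖ := fun x hx =>
    le_of_not_gt fun h => (hball (mem_ball_zero_iff.2 h)) hx
  -- ### smooth modification of t ↦ t on [3ε²/4, ∞), bounded below by ε²/4
  set g : ℝ → ℝ := fun t =>
    ε^2/4 + Real.smoothTransition ((t - ε^2/4)/(ε^2/2)) * (t - ε^2/4) with hg_def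
  have hg_smooth : ContDiff ℝ ∞ g := by
    apply ContDiff.add contDiff_const
    exact (Real.smoothTransition.contDiff.comp
      ((contDiff_id.sub contDiff_const).div_const _)).mul (contDiff_id.sub contDiff_const)
  have hg_pos : ∀ t, 0 < g t := by
    intro t
    rcases le_or_gt t (ε^2/4) with h | h
    · have : Real.smoothTransition ((t - ε^2/4)/(ε^2/2)) = 0 :=
        Real.smoothTransition.zero_of_nonpos (by
          apply div_nonpos_of_nonpos_of_nonneg <;> nlinarith)
      simp only [hg_def, this, zero_mul, add_zero]
      positivity
    · have h2 := Real.smoothTransition.nonneg ((t - ε^2/4)/(ε^2/2))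
      simp only [hg_def]
      nlinarith
  have hg_eq : ∀ t, 3*(ε^2/4) ≤ t → g t = t := by
    intro t ht
    have h1 : (1:ℝ) ≤ (t - ε^2/4)/(ε^2/2) := by
      rw [le_div_iff₀ (by positivity)]
      nlinarith
    simp only [hg_def, Real.smoothTransition.one_of_one_le h1, one_mul]
    ring
  -- ### the smooth positive weight base G
  set G : EuclideanSpace ℝ (Fin N) → ℝ := fun x => g (‖x‖^2) with hG_def
  have hGsmooth : ContDiff ℝ ∞ G := hg_smooth.comp (contDiff_norm_sq ℝ)
  have hGpos : ∀ x, 0 < G x := fun x => hg_pos _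
  have hGeq : ∀ x : EuclideanSpace ℝ (Fin N), ε ≤ ‖x‖ → G x = ‖x‖^2 := by
    intro x hx
    have : 3*(ε^2/4) ≤ ‖x‖^2 := by nlinarith
    exact hg_eq _ this
  -- ### the weights W p = G ^ p
  set W : ℝ → EuclideanSpace ℝ (Fin N) → ℝ := fun p x => G x ^ p with hW_def
  have hWsmooth : ∀ p, ContDiff ℝ ∞ (W p) := by
    intro p
    rw [contDiff_iff_contDiffAt]
    intro x
    exact (Real.contDiffAt_rpow_const_of_ne (hGpos x).ne').comp x hGsmooth.contDiffAt
  have hWpos : ∀ p x, 0 < W p x := fun p x => Real.rpow_pos_of_pos (hGpos x) p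
  have hWcont : ∀ p, Continuous (W p) := fun p => (hWsmooth p).continuous
  -- ### derivative of the weight along the position vector, on the support
  have hWfder : ∀ (p : ℝ) (x : EuclideanSpace ℝ (Fin N)), ε ≤ ‖x‖ →
      fderiv ℝ (W p) x x = 2 * p * W p x := by
    intro p x hx
    have hx0 : (0:ℝ) < ‖x‖ := lt_of_lt_of_le hε hx
    have ht0 : (0:ℝ) < ‖x‖^2 := by positivity
    have hmem : {y : EuclideanSpace ℝ (Fin N) | 3*(ε^2/4) < ‖y‖^2} ∈ 𝓝 x := by
      have hopen : IsOpen {y : EuclideanSpace ℝ (Fin N) | 3*(ε^2/4) < ‖y‖^2} :=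
        isOpen_lt continuous_const (by continuity)
      exact hopen.mem_nhds (by simp only [Set.mem_setOf_eq]; nlinarith)
    have hev : W p =ᶠ[𝓝 x] fun y => (‖y‖^2) ^ p := by
      filter_upwards [hmem] with y hy
      simp only [hW_def, hG_def, hg_eq _ (le_of_lt hy)]
    rw [hev.fderiv_eq]
    have hr : HasDerivAt (fun t : ℝ => t ^ p) (p * (‖x‖^2) ^ (p - 1)) (‖x‖^2) :=
      Real.hasDerivAt_rpow_const (Or.inl ht0.ne')
    have hq : HasFDerivAt (fun y : EuclideanSpace ℝ (Fin N) => ‖y‖^2)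
        (2 • (innerSL ℝ x)) x := (hasStrictFDerivAt_norm_sq x).hasFDerivAt
    have hcomp : HasFDerivAt (fun y : EuclideanSpace ℝ (Fin N) => (‖y‖^2) ^ p)
        ((p * (‖x‖^2) ^ (p - 1)) • (2 • (innerSL ℝ x))) x := by have := hr.comp_hasFDerivAt x hq; exact this
    rw [hcomp.fderiv]
    have hinn : (innerSL ℝ x) x = ‖x‖^2 := real_inner_self_eq_norm_sq x
    have hval : ((p * (‖x‖^2) ^ (p - 1)) • (2 • (innerSL ℝ x))) x
        = p * (‖x‖^2) ^ (p - 1) * (2 * ‖x‖^2) := by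
      simp only [ContinuousLinearMap.smul_apply, hinn, smul_eq_mul]
      ring
    rw [hval]
    have h2 : (‖x‖^2) ^ (p - 1) * ‖x‖^2 = (‖x‖^2) ^ p := by
      nth_rewrite 2 [show ‖x‖^2 = (‖x‖^2) ^ (1:ℝ) from (Real.rpow_one _).symm]
      rw [← Real.rpow_add ht0]
      ring_nf
    have h3 : W p x = (‖x‖^2) ^ p := by
      simp only [hW_def, hGeq x hx]
    rw [h3, ← h2]
    ring
  -- ### generic integrability
  have key_int : ∀ h : EuclideanSpace ℝ (Fin N) → ℝ, Continuous h →
      (∀ x ∉ tsupport u, h x = 0) → Integrable h :=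
    fun h hc hz => hc.integrable_of_hasCompactSupport (HasCompactSupport.intro hcs hz)
  have hu0 : ∀ x ∉ tsupport u, u x = 0 := fun x hx => image_eq_zero_of_notMem_tsupport hx
  have hucont : Continuous u := hu'.continuous
  have hDcont : Continuous fun x => fderiv ℝ u x x :=
    (hu'.continuous_fderiv hone).clm_apply continuous_id
  have hD0 : ∀ x ∉ tsupport u, fderiv ℝ u x x = 0 := by
    intro x hx
    have h : fderiv ℝ u x = 0 := by
      by_contra h
      exact hx (support_fderiv_subset ℝ (Function.mem_support.2 h))
    rw [h]; rfl
  -- ### the main integration-by-parts identity, for every power p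
  have hJ : ∀ p : ℝ,
      ∫ x : EuclideanSpace ℝ (Fin N), W p x * (u x * fderiv ℝ u x x)
        = -(((N:ℝ) + 2*p)/2) * ∫ x : EuclideanSpace ℝ (Fin N), W p x * (u x * u x) := by
    intro p
    have hF2smooth : ContDiff ℝ ∞ (fun x : EuclideanSpace ℝ (Fin N) => u x * u x) :=
      hu'.mul hu'
    have hF2c : HasCompactSupport (fun x : EuclideanSpace ℝ (Fin N) => u x * u x) :=
      HasCompactSupport.intro hcs fun x hx => by rw [hu0 x hx]; ring
    have hibp := ibp N (W p) (fun x => u x * u x) (hWsmooth p) hF2smooth hF2c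
    have hfd2 : ∀ x, fderiv ℝ (fun y : EuclideanSpace ℝ (Fin N) => u y * u y) x x
        = 2 * (u x * fderiv ℝ u x x) := by
      intro x
      have hd := (hu'.differentiable hone x).hasFDerivAt
      rw [show (fun y : EuclideanSpace ℝ (Fin N) => u y * u y) = u * u from rfl, (hd.mul hd).fderiv]
      simp
      ring
    have e1 : ∫ x : EuclideanSpace ℝ (Fin N), W p x * fderiv ℝ (fun y => u y * u y) x x
        = 2 * ∫ x : EuclideanSpace ℝ (Fin N), W p x * (u x * fderiv ℝ u x x) := by
      rw [← integral_const_mul]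
      apply integral_congr_ae (Filter.Eventually.of_forall _)
      intro x
      rw [hfd2 x]
      ring
    have e2 : ∫ x : EuclideanSpace ℝ (Fin N), fderiv ℝ (W p) x x * (u x * u x)
        = 2 * p * ∫ x : EuclideanSpace ℝ (Fin N), W p x * (u x * u x) := by
      rw [← integral_const_mul]
      apply integral_congr_ae (Filter.Eventually.of_forall _)
      intro x
      by_cases h : u x = 0
      · simp [h]
      · have hx : x ∈ tsupport u := subset_closure (Function.mem_support.2 h)
        rw [hWfder p x (hsupp_norm x hx)]
        ring
    rw [e1, e2] at hibp
    linarith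
  -- ### notation for the main players
  set t : ℝ := (N:ℝ) - 2*b - 2 with ht_def
  set F0 : EuclideanSpace ℝ (Fin N) → ℝ := fun x => u x * W (-(a/2)) x with hF0_def
  set H0 : EuclideanSpace ℝ (Fin N) → ℝ :=
    fun x => (fderiv ℝ u x x + t * u x) * W (-((b+1)/2)) x with hH0_def
  have hgrad : ∀ x : EuclideanSpace ℝ (Fin N), (inner ℝ x (gradient u x) : ℝ)
      = fderiv ℝ u x x := by
    intro x
    rw [real_inner_comm]
    exact InnerProductSpace.toDual_symm_apply
  -- weight on the support is a norm power
  have hWnorm : ∀ (s : ℝ) (x : EuclideanSpace ℝ (Fin N)), x ∈ tsupport u →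
      W s x = ‖x‖ ^ (2*s) := by
    intro s x hx
    have hx0 : (0:ℝ) < ‖x‖ := lt_of_lt_of_le hε (hsupp_norm x hx)
    simp only [hW_def, hGeq x (hsupp_norm x hx)]
    rw [← Real.rpow_natCast ‖x‖ 2, ← Real.rpow_mul (norm_nonneg x)]
    norm_num
  have hWmul : ∀ (p q : ℝ) (x : EuclideanSpace ℝ (Fin N)), W p x * W q x = W (p+q) x :=
    fun p q x => (Real.rpow_add (hGpos x) p q).symm
  -- ### pointwise conversions of the three statement integrands
  have c1 : ∀ x : EuclideanSpace ℝ (Fin N), u x ^ 2 / ‖x‖ ^ (2*a) = F0 x ^ 2 := by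
    intro x
    by_cases h : u x = 0
    · simp [hF0_def, h]
    · have hx : x ∈ tsupport u := subset_closure (Function.mem_support.2 h)
      have h1 : W (-(a/2)) x ^ 2 = W (-a) x := by
        rw [pow_two, hWmul, show -(a/2) + -(a/2) = -a by ring]
      have h2 : W (-a) x = (‖x‖ ^ (2*a))⁻¹ := by
        rw [hWnorm _ _ hx, show 2 * -a = -(2*a) by ring, Real.rpow_neg (norm_nonneg x)]
      rw [div_eq_mul_inv, ← h2, ← h1, hF0_def]
      ring
  have c2 : ∀ x : EuclideanSpace ℝ (Fin N),
      (inner ℝ x (gradient u x) : ℝ) ^ 2 / ‖x‖ ^ (2*b+2)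
        = fderiv ℝ u x x ^ 2 * W (-(b+1)) x := by
    intro x
    rw [hgrad x]
    by_cases h : x ∈ tsupport u
    · have h2 : W (-(b+1)) x = (‖x‖ ^ (2*b+2))⁻¹ := by
        rw [hWnorm _ _ h, show 2 * -(b+1) = -(2*b+2) by ring, Real.rpow_neg (norm_nonneg x)]
      rw [div_eq_mul_inv, h2]
    · simp [hD0 x h]
  have c3 : ∀ x : EuclideanSpace ℝ (Fin N),
      u x ^ 2 / ‖x‖ ^ (a+b+1) = W (-((a+b+1)/2)) x * (u x * u x) := by
    intro x
    by_cases h : u x = 0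
    · simp [h]
    · have hx : x ∈ tsupport u := subset_closure (Function.mem_support.2 h)
      have h2 : W (-((a+b+1)/2)) x = (‖x‖ ^ (a+b+1))⁻¹ := by
        rw [hWnorm _ _ hx, show 2 * -((a+b+1)/2) = -(a+b+1) by ring,
          Real.rpow_neg (norm_nonneg x)]
      rw [div_eq_mul_inv, h2]
      ring
  -- ### integrability of everything in sight
  have hF0cont : Continuous F0 := hucont.mul (hWcont _)
  have hH0cont : Continuous H0 := (hDcont.add (continuous_const.mul hucont)).mul (hWcont _)
  have hF0z : ∀ x ∉ tsupport u, F0 x = 0 := fun x hx => by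
    simp only [hF0_def, hu0 x hx, zero_mul]
  have hH0z : ∀ x ∉ tsupport u, H0 x = 0 := fun x hx => by
    simp only [hH0_def, hD0 x hx, hu0 x hx, mul_zero, add_zero, zero_add, zero_mul, mul_zero]
  have iF2 : Integrable (fun x => F0 x ^ 2) :=
    key_int _ (hF0cont.pow 2) fun x hx => by rw [hF0z x hx]; ring
  have iH2 : Integrable (fun x => H0 x ^ 2) :=
    key_int _ (hH0cont.pow 2) fun x hx => by rw [hH0z x hx]; ring
  have iFH : Integrable (fun x => F0 x * H0 x) :=
    key_int _ (hF0cont.mul hH0cont) fun x hx => by rw [hF0z x hx]; ring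
  have iD2W : Integrable (fun x => fderiv ℝ u x x ^ 2 * W (-(b+1)) x) :=
    key_int _ ((hDcont.pow 2).mul (hWcont _)) fun x hx => by rw [hD0 x hx]; ring
  have iWuD : ∀ p : ℝ, Integrable (fun x => W p x * (u x * fderiv ℝ u x x)) := fun p =>
    key_int _ ((hWcont p).mul (hucont.mul hDcont)) fun x hx => by rw [hu0 x hx]; ring
  have iWuu : ∀ p : ℝ, Integrable (fun x => W p x * (u x * u x)) := fun p =>
    key_int _ ((hWcont p).mul (hucont.mul hucont)) fun x hx => by rw [hu0 x hx]; ring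
  -- ### the three statement integrals in canonical form
  have A1 : (∫ x : EuclideanSpace ℝ (Fin N), u x ^ 2 / ‖x‖ ^ (2*a))
      = ∫ x : EuclideanSpace ℝ (Fin N), F0 x ^ 2 :=
    integral_congr_ae (Filter.Eventually.of_forall c1)
  have A3 : (∫ x : EuclideanSpace ℝ (Fin N), u x ^ 2 / ‖x‖ ^ (a+b+1))
      = ∫ x : EuclideanSpace ℝ (Fin N), W (-((a+b+1)/2)) x * (u x * u x) :=
    integral_congr_ae (Filter.Eventually.of_forall c3)
  -- ### ∫ H0² equals the middle statement integral
  have hH0sq : ∀ x : EuclideanSpace ℝ (Fin N), H0 x ^ 2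
      = fderiv ℝ u x x ^ 2 * W (-(b+1)) x + ((2*t) * (W (-(b+1)) x * (u x * fderiv ℝ u x x))
        + t^2 * (W (-(b+1)) x * (u x * u x))) := by
    intro x
    have hWsq : W (-((b+1)/2)) x ^ 2 = W (-(b+1)) x := by
      rw [pow_two, hWmul, show -((b+1)/2) + -((b+1)/2) = -(b+1) by ring]
    calc H0 x ^ 2 = (fderiv ℝ u x x + t * u x)^2 * W (-((b+1)/2)) x ^ 2 := by
          rw [hH0_def]; ring
      _ = (fderiv ℝ u x x + t * u x)^2 * W (-(b+1)) x := by rw [hWsq]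
      _ = _ := by ring
  have A2 : (∫ x : EuclideanSpace ℝ (Fin N), (inner ℝ x (gradient u x) : ℝ) ^ 2 / ‖x‖ ^ (2*b+2))
      = ∫ x : EuclideanSpace ℝ (Fin N), H0 x ^ 2 := by
    rw [integral_congr_ae (Filter.Eventually.of_forall c2)]
    have e0 : (∫ x : EuclideanSpace ℝ (Fin N), H0 x ^ 2)
        = ∫ x : EuclideanSpace ℝ (Fin N), (fderiv ℝ u x x ^ 2 * W (-(b+1)) x
          + ((2*t) * (W (-(b+1)) x * (u x * fderiv ℝ u x x))
            + t^2 * (W (-(b+1)) x * (u x * u x)))) :=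
      integral_congr_ae (Filter.Eventually.of_forall hH0sq)
    have e1 : (∫ x : EuclideanSpace ℝ (Fin N), (fderiv ℝ u x x ^ 2 * W (-(b+1)) x
          + ((2*t) * (W (-(b+1)) x * (u x * fderiv ℝ u x x))
            + t^2 * (W (-(b+1)) x * (u x * u x)))))
        = (∫ x : EuclideanSpace ℝ (Fin N), fderiv ℝ u x x ^ 2 * W (-(b+1)) x)
          + ∫ x : EuclideanSpace ℝ (Fin N), ((2*t) * (W (-(b+1)) x * (u x * fderiv ℝ u x x))
            + t^2 * (W (-(b+1)) x * (u x * u x))) :=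
      integral_add iD2W (((iWuD _).const_mul _).add ((iWuu _).const_mul _))
    have e2 : (∫ x : EuclideanSpace ℝ (Fin N),
          ((2*t) * (W (-(b+1)) x * (u x * fderiv ℝ u x x))
            + t^2 * (W (-(b+1)) x * (u x * u x))))
        = (∫ x : EuclideanSpace ℝ (Fin N), (2*t) * (W (-(b+1)) x * (u x * fderiv ℝ u x x)))
          + ∫ x : EuclideanSpace ℝ (Fin N), t^2 * (W (-(b+1)) x * (u x * u x)) :=
      integral_add ((iWuD _).const_mul _) ((iWuu _).const_mul _)
    rw [e0, e1, e2, integral_const_mul, integral_const_mul, hJ (-(b+1))]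
    rw [show ((N:ℝ) + 2 * -(b+1)) / 2 = t/2 by rw [ht_def]; ring]
    ring
  -- ### the cross integral
  have hFH : (∫ x : EuclideanSpace ℝ (Fin N), F0 x * H0 x)
      = (((N:ℝ) + a - 3*b - 3)/2)
        * ∫ x : EuclideanSpace ℝ (Fin N), W (-((a+b+1)/2)) x * (u x * u x) := by
    have hsum : ∀ x : EuclideanSpace ℝ (Fin N), F0 x * H0 x
        = W (-((a+b+1)/2)) x * (u x * fderiv ℝ u x x)
          + t * (W (-((a+b+1)/2)) x * (u x * u x)) := by
      intro x
      have hWm : W (-(a/2)) x * W (-((b+1)/2)) x = W (-((a+b+1)/2)) x := by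
        rw [hWmul, show -(a/2) + -((b+1)/2) = -((a+b+1)/2) by ring]
      calc F0 x * H0 x
          = (u x * (fderiv ℝ u x x + t * u x)) * (W (-(a/2)) x * W (-((b+1)/2)) x) := by
            rw [hF0_def, hH0_def]; ring
        _ = (u x * (fderiv ℝ u x x + t * u x)) * W (-((a+b+1)/2)) x := by rw [hWm]
        _ = _ := by ring
    have e1 : (∫ x : EuclideanSpace ℝ (Fin N),
          (W (-((a+b+1)/2)) x * (u x * fderiv ℝ u x x)
            + t * (W (-((a+b+1)/2)) x * (u x * u x))))
        = (∫ x : EuclideanSpace ℝ (Fin N), W (-((a+b+1)/2)) x * (u x * fderiv ℝ u x x))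
          + ∫ x : EuclideanSpace ℝ (Fin N), t * (W (-((a+b+1)/2)) x * (u x * u x)) :=
      integral_add (iWuD _) ((iWuu _).const_mul _)
    rw [integral_congr_ae (Filter.Eventually.of_forall hsum), e1, integral_const_mul,
      hJ (-((a+b+1)/2))]
    rw [show ((N:ℝ) + 2 * -((a+b+1)/2)) / 2 = ((N:ℝ) - (a+b+1))/2 by ring, ht_def]
    ring
  -- ### Cauchy–Schwarz and conclusion
  have hcs2 := cs_integral volume F0 H0 iF2 iH2 iFH
  rw [ge_iff_le, A1, A2, A3]
  calc ((N:ℝ) - (3*b - a + 3))^2/4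
        * (∫ x : EuclideanSpace ℝ (Fin N), W (-((a+b+1)/2)) x * (u x * u x)) ^ 2
      = ((((N:ℝ) + a - 3*b - 3)/2)
          * ∫ x : EuclideanSpace ℝ (Fin N), W (-((a+b+1)/2)) x * (u x * u x)) ^ 2 := by ring
    _ = (∫ x : EuclideanSpace ℝ (Fin N), F0 x * H0 x) ^ 2 := by rw [hFH]
    _ ≤ (∫ x : EuclideanSpace ℝ (Fin N), F0 x ^ 2)
        * ∫ x : EuclideanSpace ℝ (Fin N), H0 x ^ 2 := hcs2
end

section
/- For every N ≥ 1, all real a, b, and every u ∈ C_0^∞(ℝ^N\{0}): (∫ |u|²/|x|^{2a} dx)·(∫ |x·∇u|²/|x|^{2b+2} dx) ≥ min{(N−(a+b+1))²/4, (N−(3b−a+3))²/4}·(∫ |u|²/|x|^{a+b+1} dx)². -/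
open MeasureTheory Real Filter
open scoped Topology

variable {E : Type*} [NormedAddCommGroup E] [InnerProductSpace ℝ E]

omit [InnerProductSpace ℝ E] in
lemma aux_rpow_sq (x : E) (p : ℝ) : ((‖x‖ ^ 2 : ℝ)) ^ p = ‖x‖ ^ (2 * p) := by
  rw [← Real.rpow_natCast ‖x‖ 2, ← Real.rpow_mul (norm_nonneg x)]
  norm_num

lemma aux_hasFDerivAt_norm_rpow (x : E) (hx : x ≠ 0) (c : ℝ) :
    HasFDerivAt (fun y : E => ‖y‖ ^ c) ((c * ‖x‖ ^ (c - 2)) • (innerSL ℝ x : E →L[ℝ] ℝ)) x := by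
  have hpos : (0:ℝ) < ‖x‖ := norm_pos_iff.mpr hx
  have h2 : (‖x‖ ^ 2 : ℝ) ≠ 0 := by positivity
  have hq : HasFDerivAt (fun y : E => ‖y‖ ^ 2) (2 • (innerSL ℝ x)) x :=
    (hasStrictFDerivAt_norm_sq x).hasFDerivAt
  have hr : HasDerivAt (fun t : ℝ => t ^ (c/2)) ((c/2) * (‖x‖^2 : ℝ) ^ (c/2 - 1)) (‖x‖^2) :=
    Real.hasDerivAt_rpow_const (Or.inl h2)
  have hcomp := hr.comp_hasFDerivAt x hq
  have hfun : (fun y : E => ‖y‖ ^ c) = (fun t : ℝ => t ^ (c/2)) ∘ (fun y : E => ‖y‖ ^ 2) := by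
    funext y
    simp only [Function.comp_apply, aux_rpow_sq]
    ring_nf
  have hder : ((c/2) * (‖x‖^2 : ℝ) ^ (c/2 - 1)) • (2 • (innerSL ℝ x)) =
      (c * ‖x‖ ^ (c - 2)) • (innerSL ℝ x : E →L[ℝ] ℝ) := by
    ext v
    simp only [ContinuousLinearMap.smul_apply, ContinuousLinearMap.coe_smul', Pi.smul_apply,
      smul_eq_mul, aux_rpow_sq, nsmul_eq_mul, Nat.cast_ofNat]
    rw [show 2 * (c/2 - 1) = c - 2 by ring]
    ring
  rw [hfun]
  rw [hder] at hcomp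
  exact hcomp

lemma aux_contAt_rpow (x : E) (hx : x ≠ 0) (p : ℝ) :
    ContinuousAt (fun y : E => ‖y‖ ^ p) x := by
  exact (Real.continuousAt_rpow_const ‖x‖ p (Or.inl (norm_ne_zero_iff.mpr hx))).comp
    continuous_norm.continuousAt

lemma aux_cs {α : Type*} [MeasurableSpace α] (μ : Measure α) (F G : α → ℝ)
    (hF : MemLp F (ENNReal.ofReal 2) μ) (hG : MemLp G (ENNReal.ofReal 2) μ) :
    (∫ x, F x * G x ∂μ) ^ 2 ≤ (∫ x, ‖F x‖ ^ (2:ℝ) ∂μ) * (∫ x, ‖G x‖ ^ (2:ℝ) ∂μ) := by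
  have hpq : (2:ℝ).HolderConjugate 2 := Real.HolderConjugate.two_two
  have h := integral_mul_norm_le_Lp_mul_Lq (μ := μ) hpq hF hG
  have h1 : |∫ x, F x * G x ∂μ| ≤ ∫ x, ‖F x‖ * ‖G x‖ ∂μ := by
    calc |∫ x, F x * G x ∂μ| ≤ ∫ x, ‖F x * G x‖ ∂μ := by
          simpa [Real.norm_eq_abs] using norm_integral_le_integral_norm (fun x => F x * G x) (μ := μ)
      _ = ∫ x, ‖F x‖ * ‖G x‖ ∂μ := by simp [norm_mul]
  set A := ∫ x, ‖F x‖ ^ (2:ℝ) ∂μ with hAdef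
  set B := ∫ x, ‖G x‖ ^ (2:ℝ) ∂μ with hBdef
  have hA : 0 ≤ A := integral_nonneg fun x => Real.rpow_nonneg (norm_nonneg _) _
  have hB : 0 ≤ B := integral_nonneg fun x => Real.rpow_nonneg (norm_nonneg _) _
  have h2 : |∫ x, F x * G x ∂μ| ≤ A ^ ((1:ℝ)/2) * B ^ ((1:ℝ)/2) := h1.trans h
  have h3 : (∫ x, F x * G x ∂μ) ^ 2 ≤ (A ^ ((1:ℝ)/2) * B ^ ((1:ℝ)/2)) ^ 2 := by
    rw [← sq_abs]
    exact pow_le_pow_left₀ (abs_nonneg _) h2 2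
  refine h3.trans_eq ?_
  rw [mul_pow, ← Real.rpow_natCast (A ^ ((1:ℝ)/2)) 2, ← Real.rpow_natCast (B ^ ((1:ℝ)/2)) 2,
    ← Real.rpow_mul hA, ← Real.rpow_mul hB]
  norm_num

section Main

variable {N : ℕ} {u : EuclideanSpace ℝ (Fin N) → ℝ}

omit [InnerProductSpace ℝ E] in
lemma aux_cont (hcs : HasCompactSupport u) {ε : ℝ} (hε : 0 < ε)
    {f : EuclideanSpace ℝ (Fin N) → ℝ}
    (hf0 : ∀ x : EuclideanSpace ℝ (Fin N), ‖x‖ < ε → f x = 0)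
    (hfc : ∀ x : EuclideanSpace ℝ (Fin N), x ≠ 0 → ContinuousAt f x)
    (hsupp : Function.support f ⊆ tsupport u) :
    Continuous f ∧ HasCompactSupport f := by
  have hcont : Continuous f := by
    rw [continuous_iff_continuousAt]
    intro x
    by_cases hx : x = 0
    · subst hx
      have hev : f =ᶠ[𝓝 (0 : EuclideanSpace ℝ (Fin N))] fun _ => (0:ℝ) := by
        refine Filter.eventually_of_mem (Metric.ball_mem_nhds _ hε) ?_
        intro y hy
        exact hf0 y (by simpa using mem_ball_zero_iff.mp hy)
      exact hev.continuousAt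
    · exact hfc x hx
  have hcsf : HasCompactSupport f := hcs.mono' hsupp
  exact ⟨hcont, hcsf⟩

omit [InnerProductSpace ℝ E] in
lemma aux_cont_int (hcs : HasCompactSupport u) {ε : ℝ} (hε : 0 < ε)
    {f : EuclideanSpace ℝ (Fin N) → ℝ}
    (hf0 : ∀ x : EuclideanSpace ℝ (Fin N), ‖x‖ < ε → f x = 0)
    (hfc : ∀ x : EuclideanSpace ℝ (Fin N), x ≠ 0 → ContinuousAt f x)
    (hsupp : Function.support f ⊆ tsupport u) :
    Integrable f := by
  obtain ⟨h1, h2⟩ := aux_cont hcs hε hf0 hfc hsupp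
  exact h1.integrable_of_hasCompactSupport h2

omit [InnerProductSpace ℝ E] in
lemma aux_memL2 (hcs : HasCompactSupport u) {ε : ℝ} (hε : 0 < ε)
    {f : EuclideanSpace ℝ (Fin N) → ℝ}
    (hf0 : ∀ x : EuclideanSpace ℝ (Fin N), ‖x‖ < ε → f x = 0)
    (hfc : ∀ x : EuclideanSpace ℝ (Fin N), x ≠ 0 → ContinuousAt f x)
    (hsupp : Function.support f ⊆ tsupport u) :
    MemLp f (ENNReal.ofReal 2) volume := by
  obtain ⟨h1, h2⟩ := aux_cont hcs hε hf0 hfc hsupp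
  exact h1.memLp_of_hasCompactSupport h2

lemma aux_ibp (hu : ContDiff ℝ (⊤ : ℕ∞) u) (hcs : HasCompactSupport u) {ε : ℝ} (hε : 0 < ε)
    (hball : ∀ x : EuclideanSpace ℝ (Fin N), ‖x‖ < ε → u x = 0) (c : ℝ) :
    ∫ x : EuclideanSpace ℝ (Fin N), u x * fderiv ℝ u x x * ‖x‖ ^ (-c) =
      ((c - N)/2) * ∫ x : EuclideanSpace ℝ (Fin N), u x ^ 2 * ‖x‖ ^ (-c) := by
  have hud : Differentiable ℝ u := hu.differentiable (by simp)
  have hcontu : Continuous u := hu.continuous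
  have hcontfd : Continuous (fderiv ℝ u) := hu.continuous_fderiv (by simp)
  set G' : (EuclideanSpace ℝ (Fin N)) → (EuclideanSpace ℝ (Fin N)) →L[ℝ] ℝ := fun x =>
    (2 * u x * ‖x‖ ^ (-c)) • fderiv ℝ u x
      + (u x ^ 2 * (-c * ‖x‖ ^ (-c - 2))) • (innerSL ℝ x) with hG'
  have happ : ∀ x v : EuclideanSpace ℝ (Fin N), G' x v =
      (2 * u x * ‖x‖ ^ (-c)) * fderiv ℝ u x v
        + (u x ^ 2 * (-c * ‖x‖ ^ (-c - 2))) * (inner ℝ x v : ℝ) := by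
    intro x v
    simp [hG']
  have hzero : ∀ x : EuclideanSpace ℝ (Fin N), u x = 0 → G' x = 0 := by
    intro x h
    simp [hG', h]
  have hderiv : ∀ x : EuclideanSpace ℝ (Fin N),
      HasFDerivAt (fun y => u y ^ 2 * ‖y‖ ^ (-c)) (G' x) x := by
    intro x
    by_cases hx : ‖x‖ < ε
    · rw [hzero x (hball x hx)]
      have hev : (fun y : EuclideanSpace ℝ (Fin N) => u y ^ 2 * ‖y‖ ^ (-c))
          =ᶠ[𝓝 x] fun _ => (0:ℝ) := by
        refine Filter.eventually_of_mem
          (Metric.isOpen_ball.mem_nhds (mem_ball_zero_iff.mpr hx)) ?_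
        intro y hy
        simp [hball y (mem_ball_zero_iff.mp hy)]
      exact (hasFDerivAt_const (0:ℝ) x).congr_of_eventuallyEq hev
    · have hx0 : x ≠ 0 := by
        intro h
        rw [h] at hx
        simp [hε] at hx
      have h2 : HasFDerivAt (fun y => u y * u y)
          (u x • fderiv ℝ u x + u x • fderiv ℝ u x) x :=
        ((hud x).hasFDerivAt).mul ((hud x).hasFDerivAt)
      have h3 := aux_hasFDerivAt_norm_rpow x hx0 (-c)
      have h4 := h2.mul h3
      have hfun : (fun y : EuclideanSpace ℝ (Fin N) => u y ^ 2 * ‖y‖ ^ (-c))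
          = fun y => (u y * u y) * ‖y‖ ^ (-c) := by
        funext y
        ring
      rw [hfun]
      have hder : (u x * u x) • ((-c * ‖x‖ ^ (-c - 2)) • (innerSL ℝ x))
          + (‖x‖ ^ (-c)) • (u x • fderiv ℝ u x + u x • fderiv ℝ u x) = G' x := by
        ext v
        simp only [hG', ContinuousLinearMap.add_apply, ContinuousLinearMap.smul_apply,
          smul_eq_mul, innerSL_apply_apply]
        ring
      rw [← hder]
      exact h4
  -- integrability of the various integrands
  have hsupport : ∀ f : EuclideanSpace ℝ (Fin N) → ℝ,
      (∀ x, u x = 0 → f x = 0) → Function.support f ⊆ tsupport u := by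
    intro f hf x hx
    by_contra h
    exact hx (hf x (image_eq_zero_of_notMem_tsupport h))
  have cproj : ∀ i : Fin N, Continuous fun x : EuclideanSpace ℝ (Fin N) => x i := by
    intro i
    exact (EuclideanSpace.proj i : EuclideanSpace ℝ (Fin N) →L[ℝ] ℝ).continuous
  have hcG' : ∀ (v : EuclideanSpace ℝ (Fin N)) (x : EuclideanSpace ℝ (Fin N)), x ≠ 0 →
      ContinuousAt (fun y => G' y v) x := by
    intro v x hx
    have e1 : ContinuousAt (fun y : EuclideanSpace ℝ (Fin N) => 2 * u y * ‖y‖ ^ (-c)) x :=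
      (continuousAt_const.mul hcontu.continuousAt).mul (aux_contAt_rpow x hx (-c))
    have e2 : ContinuousAt (fun y : EuclideanSpace ℝ (Fin N) => fderiv ℝ u y v) x :=
      (hcontfd.clm_apply continuous_const).continuousAt
    have e3 : ContinuousAt
        (fun y : EuclideanSpace ℝ (Fin N) => u y ^ 2 * (-c * ‖y‖ ^ (-c - 2))) x :=
      (hcontu.continuousAt.pow 2).mul (continuousAt_const.mul (aux_contAt_rpow x hx (-c - 2)))
    have e4 : ContinuousAt (fun y : EuclideanSpace ℝ (Fin N) => (inner ℝ y v : ℝ)) x :=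
      (continuous_id.inner continuous_const).continuousAt
    have : (fun y : EuclideanSpace ℝ (Fin N) => G' y v)
        = fun y => (2 * u y * ‖y‖ ^ (-c)) * fderiv ℝ u y v
          + (u y ^ 2 * (-c * ‖y‖ ^ (-c - 2))) * (inner ℝ y v : ℝ) := funext fun y => happ y v
    rw [this]
    exact (e1.mul e2).add (e3.mul e4)
  have hint1 : ∀ i : Fin N,
      Integrable (fun x : EuclideanSpace ℝ (Fin N) =>
        G' x (EuclideanSpace.single i 1) * x i) := by
    intro i
    apply aux_cont_int hcs hε
    · intro x hx
      rw [hzero x (hball x hx)]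
      simp
    · intro x hx
      exact (hcG' _ x hx).mul (cproj i).continuousAt
    · apply hsupport
      intro x hx
      rw [hzero x hx]
      simp
  have hintg : Integrable (fun x : EuclideanSpace ℝ (Fin N) => u x ^ 2 * ‖x‖ ^ (-c)) := by
    apply aux_cont_int hcs hε
    · intro x hx
      rw [hball x hx]
      ring
    · intro x hx
      exact (hcontu.continuousAt.pow 2).mul (aux_contAt_rpow x hx (-c))
    · apply hsupport
      intro x hx
      rw [hx]
      ring
  have hintg3 : ∀ i : Fin N,
      Integrable (fun x : EuclideanSpace ℝ (Fin N) => (u x ^ 2 * ‖x‖ ^ (-c)) * x i) := by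
    intro i
    apply aux_cont_int hcs hε
    · intro x hx
      rw [hball x hx]
      ring
    · intro x hx
      exact ((hcontu.continuousAt.pow 2).mul (aux_contAt_rpow x hx (-c))).mul
        (cproj i).continuousAt
    · apply hsupport
      intro x hx
      rw [hx]
      ring
  have hintk : Integrable (fun x : EuclideanSpace ℝ (Fin N) =>
      u x * fderiv ℝ u x x * ‖x‖ ^ (-c)) := by
    apply aux_cont_int hcs hε
    · intro x hx
      rw [hball x hx]
      ring
    · intro x hx
      exact ((hcontu.continuousAt.mul
        ((hcontfd.clm_apply continuous_id).continuousAt))).mul (aux_contAt_rpow x hx (-c))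
    · apply hsupport
      intro x hx
      rw [hx]
      ring
  -- integration by parts in each coordinate direction
  have hibp : ∀ i : Fin N,
      ∫ x : EuclideanSpace ℝ (Fin N), u x ^ 2 * ‖x‖ ^ (-c) =
        - ∫ x : EuclideanSpace ℝ (Fin N), G' x (EuclideanSpace.single i 1) * x i := by
    intro i
    have hproj : ∀ x : EuclideanSpace ℝ (Fin N),
        HasFDerivAt (fun y : EuclideanSpace ℝ (Fin N) => y i)
          (EuclideanSpace.proj i : EuclideanSpace ℝ (Fin N) →L[ℝ] ℝ) x := fun x =>
      (EuclideanSpace.proj i : EuclideanSpace ℝ (Fin N) →L[ℝ] ℝ).hasFDerivAt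
    have hps : (EuclideanSpace.proj i : EuclideanSpace ℝ (Fin N) →L[ℝ] ℝ)
        (EuclideanSpace.single i 1) = 1 := by
      simp
    have H := integral_bilinear_hasFDerivAt_right_eq_neg_left_of_integrable
      (μ := (volume : Measure (EuclideanSpace ℝ (Fin N))))
      (B := ContinuousLinearMap.mul ℝ ℝ)
      (f := fun y => u y ^ 2 * ‖y‖ ^ (-c)) (f' := G')
      (g := fun y : EuclideanSpace ℝ (Fin N) => y i)
      (g' := fun _ => (EuclideanSpace.proj i : EuclideanSpace ℝ (Fin N) →L[ℝ] ℝ))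
      (v := EuclideanSpace.single i 1)
      (by simpa using hint1 i)
      (by simpa [hps] using hintg)
      (by simpa using hintg3 i)
      (fun x _ => hderiv x) (fun x _ => hproj x)
    simpa [hps] using H
  -- summation
  have hdecomp : ∀ x : EuclideanSpace ℝ (Fin N),
      (∑ i : Fin N, G' x (EuclideanSpace.single i 1) * x i) = G' x x := by
    intro x
    have hx : ∑ i : Fin N, (x i) • EuclideanSpace.single i (1:ℝ) = x := by
      simpa [EuclideanSpace.basisFun_apply, EuclideanSpace.basisFun_repr] using
        (EuclideanSpace.basisFun (Fin N) ℝ).sum_repr x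
    calc ∑ i : Fin N, G' x (EuclideanSpace.single i 1) * x i
        = ∑ i : Fin N, G' x ((x i) • EuclideanSpace.single i 1) := by
          simp [_root_.map_smul, mul_comm]
      _ = G' x (∑ i : Fin N, (x i) • EuclideanSpace.single i 1) := by rw [map_sum]
      _ = G' x x := by rw [hx]
  have hNg : (N : ℝ) * (∫ x : EuclideanSpace ℝ (Fin N), u x ^ 2 * ‖x‖ ^ (-c)) =
      - ∫ x : EuclideanSpace ℝ (Fin N), G' x x := by
    calc (N : ℝ) * (∫ x : EuclideanSpace ℝ (Fin N), u x ^ 2 * ‖x‖ ^ (-c))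
        = ∑ _i : Fin N, ∫ x : EuclideanSpace ℝ (Fin N), u x ^ 2 * ‖x‖ ^ (-c) := by
          rw [Finset.sum_const, Finset.card_univ, Fintype.card_fin, nsmul_eq_mul]
      _ = ∑ i : Fin N, - ∫ x : EuclideanSpace ℝ (Fin N),
            G' x (EuclideanSpace.single i 1) * x i := by
          exact Finset.sum_congr rfl fun i _ => hibp i
      _ = - ∑ i : Fin N, ∫ x : EuclideanSpace ℝ (Fin N),
            G' x (EuclideanSpace.single i 1) * x i := by
          rw [← Finset.sum_neg_distrib]
      _ = - ∫ x : EuclideanSpace ℝ (Fin N), ∑ i : Fin N,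
            G' x (EuclideanSpace.single i 1) * x i := by
          rw [← integral_finset_sum _ fun i _ => hint1 i]
      _ = - ∫ x : EuclideanSpace ℝ (Fin N), G' x x := by
          congr 1
          exact integral_congr_ae (Filter.Eventually.of_forall hdecomp)
  -- pointwise formula for G' x x
  have hgx : ∀ x : EuclideanSpace ℝ (Fin N), G' x x =
      2 * (u x * fderiv ℝ u x x * ‖x‖ ^ (-c)) - c * (u x ^ 2 * ‖x‖ ^ (-c)) := by
    intro x
    rw [happ]
    by_cases hx : u x = 0
    · simp [hx]
    · have hxε : ¬ ‖x‖ < ε := fun h => hx (hball x h)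
      have hpos : (0:ℝ) < ‖x‖ := lt_of_lt_of_le hε (not_lt.mp hxε)
      have h22 : (‖x‖:ℝ) ^ (-c - 2) * ‖x‖ ^ (2:ℕ) = ‖x‖ ^ (-c) := by
        rw [← Real.rpow_natCast ‖x‖ 2, ← Real.rpow_add hpos]
        norm_num
      rw [real_inner_self_eq_norm_sq]
      push_cast
      linear_combination (u x ^ 2 * (-c)) * h22
  have hsplit : ∫ x : EuclideanSpace ℝ (Fin N), G' x x =
      2 * (∫ x : EuclideanSpace ℝ (Fin N), u x * fderiv ℝ u x x * ‖x‖ ^ (-c))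
        - c * (∫ x : EuclideanSpace ℝ (Fin N), u x ^ 2 * ‖x‖ ^ (-c)) := by
    rw [← integral_const_mul, ← integral_const_mul, ← integral_sub (hintk.const_mul 2)
      (hintg.const_mul c)]
    exact integral_congr_ae (Filter.Eventually.of_forall hgx)
  rw [hsplit] at hNg
  linarith [hNg]

end Main

theorem stmt_5 (N : ℕ) (hN : 1 ≤ N) (a b : ℝ)
    (u : EuclideanSpace ℝ (Fin N) → ℝ)
    (hu : ContDiff ℝ (⊤ : ℕ∞) u) (hcs : HasCompactSupport u)
    (h0 : (0 : EuclideanSpace ℝ (Fin N)) ∉ tsupport u) :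
    (∫ x : EuclideanSpace ℝ (Fin N), (u x) ^ 2 / ‖x‖ ^ (2 * a)) *
      (∫ x : EuclideanSpace ℝ (Fin N),
        (inner ℝ x (gradient u x) : ℝ) ^ 2 / ‖x‖ ^ (2 * b + 2))
      ≥ min (((N : ℝ) - (a + b + 1)) ^ 2 / 4) (((N : ℝ) - (3 * b - a + 3)) ^ 2 / 4) *
        (∫ x : EuclideanSpace ℝ (Fin N), (u x) ^ 2 / ‖x‖ ^ (a + b + 1)) ^ 2 := by
  obtain ⟨ε, hε, hball⟩ : ∃ ε > 0, ∀ x : EuclideanSpace ℝ (Fin N), ‖x‖ < ε → u x = 0 := by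
    have hopen : IsOpen (tsupport u)ᶜ := (isClosed_tsupport u).isOpen_compl
    obtain ⟨ε, hε, hsub⟩ := Metric.isOpen_iff.mp hopen 0 h0
    exact ⟨ε, hε, fun x hx =>
      image_eq_zero_of_notMem_tsupport (hsub (mem_ball_zero_iff.mpr hx))⟩
  have hu00 : u 0 = 0 := hball 0 (by simpa using hε)
  have hud : Differentiable ℝ u := hu.differentiable (by simp)
  have hcontu : Continuous u := hu.continuous
  have hcontfd : Continuous (fderiv ℝ u) := hu.continuous_fderiv (by simp)
  have hfd0 : ∀ x : EuclideanSpace ℝ (Fin N), ‖x‖ < ε → fderiv ℝ u x = 0 := by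
    intro x hx
    have hev : u =ᶠ[𝓝 x] fun _ => (0:ℝ) := by
      refine Filter.eventually_of_mem
        (Metric.isOpen_ball.mem_nhds (mem_ball_zero_iff.mpr hx)) ?_
      intro y hy
      exact hball y (mem_ball_zero_iff.mp hy)
    rw [hev.fderiv_eq]
    exact fderiv_const_apply 0
  have hgrad : ∀ x : EuclideanSpace ℝ (Fin N),
      (inner ℝ x (gradient u x) : ℝ) = fderiv ℝ u x x := by
    intro x
    rw [real_inner_comm]
    exact InnerProductSpace.toDual_symm_apply
  set c : ℝ := a + b + 1 with hc
  set F : EuclideanSpace ℝ (Fin N) → ℝ := fun x => u x * ‖x‖ ^ (-a) with hF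
  set G : EuclideanSpace ℝ (Fin N) → ℝ := fun x => fderiv ℝ u x x * ‖x‖ ^ (-(b+1)) with hG
  have hsupport : ∀ f : EuclideanSpace ℝ (Fin N) → ℝ,
      (∀ x, u x = 0 → f x = 0) → Function.support f ⊆ tsupport u := by
    intro f hf x hx
    by_contra h
    exact hx (hf x (image_eq_zero_of_notMem_tsupport h))
  have hF2 : MemLp F (ENNReal.ofReal 2) volume := by
    apply aux_memL2 hcs hε
    · intro x hx
      simp [hF, hball x hx]
    · intro x hx
      exact hcontu.continuousAt.mul (aux_contAt_rpow x hx (-a))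
    · apply hsupport
      intro x hx
      simp [hF, hx]
  have hG2 : MemLp G (ENNReal.ofReal 2) volume := by
    apply aux_memL2 hcs hε
    · intro x hx
      simp [hG, hfd0 x hx]
    · intro x hx
      exact ((hcontfd.clm_apply continuous_id).continuousAt).mul
        (aux_contAt_rpow x hx (-(b+1)))
    · intro x hx
      have : fderiv ℝ u x ≠ 0 := by
        intro h
        apply hx
        simp [hG, h]
      exact support_fderiv_subset ℝ this
  have hFG : ∀ x : EuclideanSpace ℝ (Fin N),
      F x * G x = u x * fderiv ℝ u x x * ‖x‖ ^ (-c) := by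
    intro x
    by_cases hx : x = 0
    · subst hx
      simp [hF, hG, hu00]
    · have hpos : (0:ℝ) < ‖x‖ := norm_pos_iff.mpr hx
      have : (‖x‖:ℝ) ^ (-a) * ‖x‖ ^ (-(b+1)) = ‖x‖ ^ (-c) := by
        rw [← Real.rpow_add hpos, hc]
        ring_nf
      simp only [hF, hG]
      rw [show u x * ‖x‖ ^ (-a) * (fderiv ℝ u x x * ‖x‖ ^ (-(b+1)))
          = u x * fderiv ℝ u x x * (‖x‖ ^ (-a) * ‖x‖ ^ (-(b+1))) by ring, this]
  have hK := aux_ibp hu hcs hε hball c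
  have hsq : ∀ t : ℝ, ‖t‖ ^ (2:ℝ) = t ^ 2 := by
    intro t
    rw [Real.norm_eq_abs, show (2:ℝ) = ((2:ℕ):ℝ) by norm_num, Real.rpow_natCast, sq_abs]
  have hI1 : (∫ x : EuclideanSpace ℝ (Fin N), (u x) ^ 2 / ‖x‖ ^ (2 * a))
      = ∫ x : EuclideanSpace ℝ (Fin N), ‖F x‖ ^ (2:ℝ) := by
    refine integral_congr_ae (Filter.Eventually.of_forall fun x => ?_)
    beta_reduce
    rw [hsq (F x)]
    by_cases hx : x = 0
    · subst hx
      simp [hF, hu00]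
    · have hpos : (0:ℝ) < ‖x‖ := norm_pos_iff.mpr hx
      have h1 : ((‖x‖:ℝ) ^ (-a)) ^ 2 = ‖x‖ ^ (-(2*a)) := by
        rw [sq, ← Real.rpow_add hpos]
        ring_nf
      simp only [hF]
      rw [mul_pow, h1, Real.rpow_neg (norm_nonneg x), div_eq_mul_inv]
  have hI2 : (∫ x : EuclideanSpace ℝ (Fin N),
        (inner ℝ x (gradient u x) : ℝ) ^ 2 / ‖x‖ ^ (2 * b + 2))
      = ∫ x : EuclideanSpace ℝ (Fin N), ‖G x‖ ^ (2:ℝ) := by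
    refine integral_congr_ae (Filter.Eventually.of_forall fun x => ?_)
    beta_reduce
    rw [hsq (G x), hgrad x]
    by_cases hx : x = 0
    · subst hx
      simp [hG]
    · have hpos : (0:ℝ) < ‖x‖ := norm_pos_iff.mpr hx
      have h1 : ((‖x‖:ℝ) ^ (-(b+1))) ^ 2 = ‖x‖ ^ (-(2*b+2)) := by
        rw [sq, ← Real.rpow_add hpos]
        ring_nf
      simp only [hG]
      rw [mul_pow, h1, Real.rpow_neg (norm_nonneg x), div_eq_mul_inv]
  have hJ : (∫ x : EuclideanSpace ℝ (Fin N), (u x) ^ 2 / ‖x‖ ^ (a + b + 1))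
      = ∫ x : EuclideanSpace ℝ (Fin N), u x ^ 2 * ‖x‖ ^ (-c) := by
    refine integral_congr_ae (Filter.Eventually.of_forall fun x => ?_)
    beta_reduce
    by_cases hx : x = 0
    · subst hx
      simp [hu00]
    · rw [hc, Real.rpow_neg (norm_nonneg x), div_eq_mul_inv]
  have hKint : (∫ x : EuclideanSpace ℝ (Fin N), F x * G x)
      = ((c - N)/2) * ∫ x : EuclideanSpace ℝ (Fin N), u x ^ 2 * ‖x‖ ^ (-c) := by
    rw [← hK]
    exact integral_congr_ae (Filter.Eventually.of_forall hFG)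
  have hCS := aux_cs volume F G hF2 hG2
  rw [ge_iff_le, hI1, hI2, hJ]
  set Jg : ℝ := ∫ x : EuclideanSpace ℝ (Fin N), u x ^ 2 * ‖x‖ ^ (-c) with hJg
  calc min (((N:ℝ) - c) ^ 2 / 4) (((N:ℝ) - (3 * b - a + 3)) ^ 2 / 4) * Jg ^ 2
      ≤ (((N:ℝ) - c) ^ 2 / 4) * Jg ^ 2 :=
        mul_le_mul_of_nonneg_right (min_le_left _ _) (sq_nonneg Jg)
    _ = (((c - (N:ℝ))/2) * Jg) ^ 2 := by ring
    _ = (∫ x : EuclideanSpace ℝ (Fin N), F x * G x) ^ 2 := by rw [hKint]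
    _ ≤ (∫ x : EuclideanSpace ℝ (Fin N), ‖F x‖ ^ (2:ℝ)) *
          (∫ x : EuclideanSpace ℝ (Fin N), ‖G x‖ ^ (2:ℝ)) := hCS
end

section
/- For every N ≥ 1, real b, and every u ∈ C_0^∞(ℝ^N\{0}): ∫ |x·∇u|²/|x|^{2b+2} dx − ((N−2b−2)²/4)·∫ |u|²/|x|^{2(b+1)} dx = ∫ |∂_r( u(x) |x|^{(N−2b−2)/2} )|² |x|^{2−N} dx, where ∂_r v denotes the radial derivative (x/|x|)·∇v. -/
open MeasureTheory Real Filter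
open scoped Topology

section Aux

variable {E : Type*} [NormedAddCommGroup E] [InnerProductSpace ℝ E]

theorem my_hasFDerivAt_norm_rpow (p : ℝ) {x : E} (hx : x ≠ 0) :
    HasFDerivAt (fun y : E => ‖y‖ ^ p) ((p * ‖x‖ ^ (p - 2)) • (innerSL ℝ x)) x := by
  have hn : (0:ℝ) < ‖x‖ := norm_pos_iff.mpr hx
  have h1 : HasFDerivAt (fun y : E => ‖y‖ ^ 2) ((2:ℕ) • (innerSL ℝ x)) x := by
    simpa using (hasFDerivAt_id x).norm_sq
  have h2 : HasDerivAt (fun t : ℝ => t ^ (p / 2)) ((p / 2) * (‖x‖ ^ 2) ^ (p / 2 - 1)) (‖x‖ ^ 2) :=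
    Real.hasDerivAt_rpow_const (Or.inl (by positivity))
  have h3 := h2.comp_hasFDerivAt x h1
  have hfun : ((fun t : ℝ => t ^ (p / 2)) ∘ fun y : E => ‖y‖ ^ 2) = fun y : E => ‖y‖ ^ p := by
    funext y
    simp only [Function.comp_apply]
    rw [← Real.rpow_natCast ‖y‖ 2, ← Real.rpow_mul (norm_nonneg y),
      show ((2:ℕ):ℝ) * (p / 2) = p by push_cast; ring]
  rw [hfun] at h3
  have hkey : ((‖x‖ ^ 2 : ℝ)) ^ (p / 2 - 1) = ‖x‖ ^ (p - 2) := by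
    rw [← Real.rpow_natCast ‖x‖ 2, ← Real.rpow_mul (norm_nonneg x),
      show ((2:ℕ):ℝ) * (p / 2 - 1) = p - 2 by push_cast; ring]
  refine h3.congr_fderiv ?_
  ext y
  simp only [ContinuousLinearMap.smul_apply, hkey, smul_eq_mul, ContinuousLinearMap.coe_smul',
    Pi.smul_apply, nsmul_eq_mul]
  push_cast
  ring

theorem my_contDiffAt_norm_rpow (p : ℝ) {x : E} (hx : x ≠ 0) :
    ContDiffAt ℝ (⊤ : ℕ∞) (fun y : E => ‖y‖ ^ p) x :=
  (Real.contDiffAt_rpow_const_of_ne (norm_ne_zero_iff.mpr hx)).comp x (contDiffAt_norm ℝ hx)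

theorem my_inner_gradient [CompleteSpace E] (f : E → ℝ) (x y : E) :
    (inner ℝ y (gradient f x) : ℝ) = fderiv ℝ f x y := by
  rw [real_inner_comm]
  exact InnerProductSpace.toDual_symm_apply

theorem my_smooth_mul_norm_rpow (p : ℝ) (h : E → ℝ) (hh : ContDiff ℝ (⊤ : ℕ∞) h)
    (h0 : (0 : E) ∉ tsupport h) : ContDiff ℝ (⊤ : ℕ∞) (fun x : E => h x * ‖x‖ ^ p) := by
  rw [contDiff_iff_contDiffAt]
  intro x
  by_cases hx : x ∈ tsupport h
  · have hx0 : x ≠ 0 := by rintro rfl; exact h0 hx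
    exact hh.contDiffAt.mul (my_contDiffAt_norm_rpow p hx0)
  · have hmem : (tsupport h)ᶜ ∈ 𝓝 x := (isClosed_tsupport h).isOpen_compl.mem_nhds hx
    have heq : (fun y : E => h y * ‖y‖ ^ p) =ᶠ[𝓝 x] (fun _ => 0) := by
      filter_upwards [hmem] with y hy
      rw [image_eq_zero_of_notMem_tsupport hy, zero_mul]
    exact (contDiffAt_const (c := (0:ℝ))).congr_of_eventuallyEq heq

end Aux

theorem my_div_thm (N : ℕ) (g : EuclideanSpace ℝ (Fin N) → ℝ)
    (hg : ContDiff ℝ (⊤ : ℕ∞) g) (hgc : HasCompactSupport g) :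
    ∫ x : EuclideanSpace ℝ (Fin N), fderiv ℝ g x x = -(N : ℝ) * ∫ x, g x := by
  have hgcont : Continuous g := hg.continuous
  have hfd : Continuous (fun x : EuclideanSpace ℝ (Fin N) => fderiv ℝ g x) :=
    hg.continuous_fderiv (by simp)
  have hgint : Integrable g := hgcont.integrable_of_hasCompactSupport hgc
  have hsum : ∀ x : EuclideanSpace ℝ (Fin N),
      ∑ i : Fin N, (x i) • (EuclideanSpace.single i (1:ℝ)) = x := by
    intro x; ext j; simp [EuclideanSpace.single_apply, Pi.single_apply]
  have hint1 : ∀ i : Fin N, Integrable (fun x : EuclideanSpace ℝ (Fin N) =>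
      fderiv ℝ g x (EuclideanSpace.single i (1:ℝ)) * EuclideanSpace.proj i x) := by
    intro i
    refine Continuous.integrable_of_hasCompactSupport
      ((hfd.clm_apply continuous_const).mul (EuclideanSpace.proj i).continuous) ?_
    exact (hgc.fderiv_apply (𝕜 := ℝ) (EuclideanSpace.single i (1:ℝ))).mul_right
  have key : ∀ i : Fin N, ∫ x : EuclideanSpace ℝ (Fin N), g x =
      - ∫ x : EuclideanSpace ℝ (Fin N),
          fderiv ℝ g x (EuclideanSpace.single i (1:ℝ)) * EuclideanSpace.proj i x := by
    intro i
    have hproj : ∀ x : EuclideanSpace ℝ (Fin N),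
        fderiv ℝ (fun y : EuclideanSpace ℝ (Fin N) => EuclideanSpace.proj i y) x
        = EuclideanSpace.proj i := fun x => (EuclideanSpace.proj i : _ →L[ℝ] ℝ).fderiv
    have H := integral_mul_fderiv_eq_neg_fderiv_mul_of_integrable (μ := volume)
      (f := g) (g := fun y : EuclideanSpace ℝ (Fin N) => EuclideanSpace.proj i y)
      (v := EuclideanSpace.single i (1:ℝ))
      ?_ ?_ ?_ (fun x _ => hg.differentiable (by simp) x)
        (fun x _ => ContinuousLinearMap.differentiableAt (EuclideanSpace.proj (𝕜 := ℝ) i))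
    · simp only [hproj] at H
      simpa [PiLp.proj_apply, EuclideanSpace.single_apply] using H
    · exact hint1 i
    · simp only [hproj]
      simpa [PiLp.proj_apply, EuclideanSpace.single_apply] using hgint
    · exact Continuous.integrable_of_hasCompactSupport
        (hgcont.mul (EuclideanSpace.proj i).continuous) hgc.mul_right
  calc ∫ x : EuclideanSpace ℝ (Fin N), fderiv ℝ g x x
      = ∫ x : EuclideanSpace ℝ (Fin N), ∑ i : Fin N,
          fderiv ℝ g x (EuclideanSpace.single i (1:ℝ)) * EuclideanSpace.proj i x := by
        congr 1; funext x
        calc fderiv ℝ g x x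
            = fderiv ℝ g x (∑ i : Fin N, (x i) • (EuclideanSpace.single i (1:ℝ))) := by
              rw [hsum]
          _ = ∑ i : Fin N, fderiv ℝ g x (EuclideanSpace.single i (1:ℝ))
                * EuclideanSpace.proj i x := by
              rw [map_sum]
              refine Finset.sum_congr rfl fun i _ => ?_
              rw [(fderiv ℝ g x).map_smul]
              simp [PiLp.proj_apply, mul_comm]
    _ = ∑ i : Fin N, ∫ x : EuclideanSpace ℝ (Fin N),
          fderiv ℝ g x (EuclideanSpace.single i (1:ℝ)) * EuclideanSpace.proj i x :=
        integral_finset_sum _ (fun i _ => hint1 i)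
    _ = ∑ _i : Fin N, - ∫ x : EuclideanSpace ℝ (Fin N), g x := by
        refine Finset.sum_congr rfl fun i _ => ?_
        linarith [key i]
    _ = -(N:ℝ) * ∫ x : EuclideanSpace ℝ (Fin N), g x := by
        rw [Finset.sum_const, Finset.card_univ, Fintype.card_fin, nsmul_eq_mul]
        ring

theorem stmt_8 (N : ℕ) (hN : 1 ≤ N) (b : ℝ)
    (u : EuclideanSpace ℝ (Fin N) → ℝ)
    (hu : ContDiff ℝ (⊤ : ℕ∞) u) (hcs : HasCompactSupport u)
    (h0 : (0 : EuclideanSpace ℝ (Fin N)) ∉ tsupport u) :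
    (∫ x : EuclideanSpace ℝ (Fin N),
        (inner ℝ x (gradient u x) : ℝ) ^ 2 / ‖x‖ ^ (2 * b + 2))
      - ((N : ℝ) - 2 * b - 2) ^ 2 / 4 *
        (∫ x : EuclideanSpace ℝ (Fin N), (u x) ^ 2 / ‖x‖ ^ (2 * (b + 1)))
      = ∫ x : EuclideanSpace ℝ (Fin N),
          (inner ℝ (‖x‖⁻¹ • x)
              (gradient (fun y : EuclideanSpace ℝ (Fin N) =>
                u y * ‖y‖ ^ (((N : ℝ) - 2 * b - 2) / 2)) x) : ℝ) ^ 2 *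
            ‖x‖ ^ ((2 : ℝ) - N) := by
  haveI : Nonempty (Fin N) := ⟨⟨0, hN⟩⟩
  set c : ℝ := -(2 * b + 2) with hc
  set α : ℝ := ((N : ℝ) - 2 * b - 2) / 2 with hα
  set P : EuclideanSpace ℝ (Fin N) → ℝ := fun x => fderiv ℝ u x x with hP
  have hudiff : Differentiable ℝ u := hu.differentiable (by simp)
  have hucont : Continuous u := hu.continuous
  have hPcont : Continuous P := (hu.continuous_fderiv (by simp)).clm_apply continuous_id
  have huz : ∀ x : EuclideanSpace ℝ (Fin N), x ∉ tsupport u → u x = 0 :=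
    fun x hx => image_eq_zero_of_notMem_tsupport hx
  have hPz : ∀ x : EuclideanSpace ℝ (Fin N), x ∉ tsupport u → P x = 0 := by
    intro x hx
    rw [hP]
    simp only
    rw [fderiv_of_notMem_tsupport (𝕜 := ℝ) hx]
    rfl
  -- integrability helper
  have integ : ∀ f : EuclideanSpace ℝ (Fin N) → ℝ,
      (∀ x : EuclideanSpace ℝ (Fin N), x ≠ 0 → ContinuousAt f x) →
      (∀ x : EuclideanSpace ℝ (Fin N), x ∉ tsupport u → f x = 0) → Integrable f := by
    intro f hf hz
    have hfc : Continuous f := by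
      rw [continuous_iff_continuousAt]
      intro x
      by_cases hx : x = 0
      · subst hx
        have hmem : (tsupport u)ᶜ ∈ 𝓝 (0 : EuclideanSpace ℝ (Fin N)) :=
          (isClosed_tsupport u).isOpen_compl.mem_nhds h0
        have heq : f =ᶠ[𝓝 (0 : EuclideanSpace ℝ (Fin N))] (fun _ => 0) := by
          filter_upwards [hmem] with y hy
          exact hz y hy
        exact ContinuousAt.congr continuousAt_const heq.symm
      · exact hf x hx
    exact hfc.integrable_of_hasCompactSupport (HasCompactSupport.intro hcs hz)
  have hnormc : ∀ (p : ℝ) (x : EuclideanSpace ℝ (Fin N)), x ≠ 0 →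
      ContinuousAt (fun y : EuclideanSpace ℝ (Fin N) => ‖y‖ ^ p) x :=
    fun p x hx => (my_contDiffAt_norm_rpow p hx).continuousAt
  have intA : Integrable (fun x : EuclideanSpace ℝ (Fin N) => P x ^ 2 * ‖x‖ ^ c) := by
    refine integ _ (fun x hx => ((hPcont.continuousAt).pow 2).mul (hnormc c x hx)) ?_
    intro x hx; rw [hPz x hx]; ring
  have intB : Integrable (fun x : EuclideanSpace ℝ (Fin N) => u x ^ 2 * ‖x‖ ^ c) := by
    refine integ _ (fun x hx => ((hucont.continuousAt).pow 2).mul (hnormc c x hx)) ?_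
    intro x hx; rw [huz x hx]; ring
  have intC : Integrable (fun x : EuclideanSpace ℝ (Fin N) => u x * P x * ‖x‖ ^ c) := by
    refine integ _
      (fun x hx => ((hucont.continuousAt).mul hPcont.continuousAt).mul (hnormc c x hx)) ?_
    intro x hx; rw [huz x hx]; ring
  set A : ℝ := ∫ x : EuclideanSpace ℝ (Fin N), P x ^ 2 * ‖x‖ ^ c with hA
  set B : ℝ := ∫ x : EuclideanSpace ℝ (Fin N), u x ^ 2 * ‖x‖ ^ c with hB
  set C : ℝ := ∫ x : EuclideanSpace ℝ (Fin N), u x * P x * ‖x‖ ^ c with hC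
  -- ae-congruence helper
  have hae : ∀ f₁ f₂ : EuclideanSpace ℝ (Fin N) → ℝ,
      (∀ x : EuclideanSpace ℝ (Fin N), x ≠ 0 → f₁ x = f₂ x) → f₁ =ᵐ[volume] f₂ := by
    intro f₁ f₂ h
    rw [Filter.EventuallyEq, ae_iff]
    refine measure_mono_null (fun x hx => ?_) (measure_singleton (0 : EuclideanSpace ℝ (Fin N)))
    simp only [Set.mem_setOf_eq] at hx
    by_contra hx0
    exact hx (h x (by simpa using hx0))
  -- divergence identity for g = u^2 * ‖x‖^c
  have husq : ContDiff ℝ (⊤ : ℕ∞) (fun x : EuclideanSpace ℝ (Fin N) => u x ^ 2) := hu.pow 2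
  have husupp : (0 : EuclideanSpace ℝ (Fin N)) ∉ tsupport (fun x => u x ^ 2) := by
    intro hmem
    refine h0 (closure_mono ?_ hmem)
    intro x hx
    simp only [Function.mem_support] at hx ⊢
    intro hux
    exact hx (by rw [hux]; ring)
  have hgsmooth : ContDiff ℝ (⊤ : ℕ∞) (fun x : EuclideanSpace ℝ (Fin N) => u x ^ 2 * ‖x‖ ^ c) :=
    my_smooth_mul_norm_rpow c _ husq husupp
  have hgsupp : HasCompactSupport (fun x : EuclideanSpace ℝ (Fin N) => u x ^ 2 * ‖x‖ ^ c) := by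
    refine HasCompactSupport.intro hcs ?_
    intro x hx
    simp only [huz x hx]
    ring
  have hdiv := my_div_thm N (fun x => u x ^ 2 * ‖x‖ ^ c) hgsmooth hgsupp
  have hgx : ∀ x : EuclideanSpace ℝ (Fin N), x ≠ 0 →
      fderiv ℝ (fun x : EuclideanSpace ℝ (Fin N) => u x ^ 2 * ‖x‖ ^ c) x x
        = 2 * (u x * P x * ‖x‖ ^ c) + c * (u x ^ 2 * ‖x‖ ^ c) := by
    intro x hx
    have hn : (0:ℝ) < ‖x‖ := norm_pos_iff.mpr hx
    have hsq : HasFDerivAt (fun y : EuclideanSpace ℝ (Fin N) => u y ^ 2)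
        ((2 * u x) • fderiv ℝ u x) x := by
      have h1 := ((hudiff x).hasFDerivAt).mul ((hudiff x).hasFDerivAt)
      have heq : (fun y : EuclideanSpace ℝ (Fin N) => u y * u y)
          = fun y : EuclideanSpace ℝ (Fin N) => u y ^ 2 := by funext y; ring
      rw [show u * u = (fun y : EuclideanSpace ℝ (Fin N) => u y * u y) from rfl, heq] at h1
      refine h1.congr_fderiv ?_
      ext w
      simp only [ContinuousLinearMap.smul_apply, ContinuousLinearMap.add_apply,
        ContinuousLinearMap.smulRight_apply, smul_eq_mul]
      ring
    have hd : HasFDerivAt (fun x : EuclideanSpace ℝ (Fin N) => u x ^ 2 * ‖x‖ ^ c) _ x :=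
      hsq.mul (my_hasFDerivAt_norm_rpow c hx)
    rw [hd.fderiv]
    have hinner : (inner ℝ x x : ℝ) = ‖x‖ ^ 2 := real_inner_self_eq_norm_sq x
    have hpow : ‖x‖ ^ (c - 2) * ‖x‖ ^ (2:ℕ) = ‖x‖ ^ c := by
      rw [← Real.rpow_natCast ‖x‖ 2, ← Real.rpow_add hn]
      norm_num
    simp only [ContinuousLinearMap.add_apply, ContinuousLinearMap.smul_apply,
      ContinuousLinearMap.smulRight_apply, innerSL_apply_apply, smul_eq_mul]
    rw [hinner, hP]
    simp only
    push_cast at hpow ⊢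
    linear_combination (c * u x ^ 2) * hpow
  have hdiv2 : 2 * C + c * B = -(N:ℝ) * B := by
    have hcongr : (fun x : EuclideanSpace ℝ (Fin N) =>
          fderiv ℝ (fun x : EuclideanSpace ℝ (Fin N) => u x ^ 2 * ‖x‖ ^ c) x x)
        =ᵐ[volume] (fun x => 2 * (u x * P x * ‖x‖ ^ c) + c * (u x ^ 2 * ‖x‖ ^ c)) :=
      hae _ _ hgx
    have heq : (∫ x : EuclideanSpace ℝ (Fin N),
        fderiv ℝ (fun x : EuclideanSpace ℝ (Fin N) => u x ^ 2 * ‖x‖ ^ c) x x) = 2 * C + c * B := by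
      rw [integral_congr_ae hcongr, integral_add (intC.const_mul 2) (intB.const_mul c),
        integral_const_mul, integral_const_mul, hB, hC]
    rw [heq] at hdiv
    exact hdiv
  have hCB : C = -α * B := by
    have hNc : -(N:ℝ) * B = (2 * (-α) + c) * B := by rw [hα, hc]; ring
    rw [hNc] at hdiv2
    linarith
  -- right-hand side
  have hRHS : (∫ x : EuclideanSpace ℝ (Fin N),
          (inner ℝ (‖x‖⁻¹ • x)
              (gradient (fun y : EuclideanSpace ℝ (Fin N) => u y * ‖y‖ ^ α) x) : ℝ) ^ 2 *
            ‖x‖ ^ ((2 : ℝ) - N))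
      = ∫ x : EuclideanSpace ℝ (Fin N), (P x + α * u x) ^ 2 * ‖x‖ ^ c := by
    refine integral_congr_ae (hae _ _ ?_)
    intro x hx
    have hn : (0:ℝ) < ‖x‖ := norm_pos_iff.mpr hx
    have hd : HasFDerivAt (fun y : EuclideanSpace ℝ (Fin N) => u y * ‖y‖ ^ α) _ x :=
      ((hudiff x).hasFDerivAt).mul (my_hasFDerivAt_norm_rpow α hx)
    have e₁ : ‖x‖ ^ (α - 2) * (‖x‖⁻¹ * ‖x‖ ^ (2:ℕ)) = ‖x‖ ^ (α - 1) := by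
      rw [← Real.rpow_neg_one ‖x‖, ← Real.rpow_natCast ‖x‖ 2, ← Real.rpow_add hn,
        ← Real.rpow_add hn]
      congr 1
      push_cast
      ring
    have e₂ : ‖x‖⁻¹ * ‖x‖ ^ α = ‖x‖ ^ (α - 1) := by
      rw [← Real.rpow_neg_one ‖x‖, ← Real.rpow_add hn]
      congr 1; ring
    have hval : (inner ℝ (‖x‖⁻¹ • x)
        (gradient (fun y : EuclideanSpace ℝ (Fin N) => u y * ‖y‖ ^ α) x) : ℝ)
        = ‖x‖ ^ (α - 1) * (P x + α * u x) := by
      rw [my_inner_gradient, hd.fderiv]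
      have hinner : (inner ℝ x x : ℝ) = ‖x‖ ^ 2 := real_inner_self_eq_norm_sq x
      simp only [ContinuousLinearMap.add_apply, ContinuousLinearMap.smul_apply,
        ContinuousLinearMap.smulRight_apply, innerSL_apply_apply, smul_eq_mul]
      rw [real_inner_smul_right, hinner, (fderiv ℝ u x).map_smul, smul_eq_mul, hP]
      simp only
      push_cast at e₁ e₂
      linear_combination (u x * α) * e₁ + (fderiv ℝ u x x) * e₂
    rw [hval]
    have hsq : (‖x‖ ^ (α - 1) : ℝ) ^ (2:ℕ) = ‖x‖ ^ (2 * α - 2) := by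
      rw [← Real.rpow_natCast (‖x‖ ^ (α - 1)) 2, ← Real.rpow_mul (norm_nonneg x)]
      congr 1; push_cast; ring
    have hcomb : ‖x‖ ^ (2 * α - 2) * ‖x‖ ^ ((2:ℝ) - N) = ‖x‖ ^ c := by
      rw [← Real.rpow_add hn]
      congr 1
      rw [hα, hc]; ring
    calc (‖x‖ ^ (α - 1) * (P x + α * u x)) ^ 2 * ‖x‖ ^ ((2:ℝ) - N)
        = (P x + α * u x) ^ 2 * ((‖x‖ ^ (α - 1) : ℝ) ^ (2:ℕ) * ‖x‖ ^ ((2:ℝ) - N)) := by ring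
      _ = (P x + α * u x) ^ 2 * ‖x‖ ^ c := by rw [hsq, hcomb]
  -- expand the square
  have hexp : (∫ x : EuclideanSpace ℝ (Fin N), (P x + α * u x) ^ 2 * ‖x‖ ^ c)
      = A + 2 * α * C + α ^ 2 * B := by
    have heq : (fun x : EuclideanSpace ℝ (Fin N) => (P x + α * u x) ^ 2 * ‖x‖ ^ c)
        = fun x => (P x ^ 2 * ‖x‖ ^ c + (2 * α) * (u x * P x * ‖x‖ ^ c))
            + α ^ 2 * (u x ^ 2 * ‖x‖ ^ c) := by
      funext x; ring
    have i1 : Integrable (fun x : EuclideanSpace ℝ (Fin N) =>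
        P x ^ 2 * ‖x‖ ^ c + (2 * α) * (u x * P x * ‖x‖ ^ c)) :=
      intA.add (intC.const_mul (2 * α))
    have i2 : Integrable (fun x : EuclideanSpace ℝ (Fin N) =>
        α ^ 2 * (u x ^ 2 * ‖x‖ ^ c)) := intB.const_mul (α ^ 2)
    rw [heq, integral_add i1 i2, integral_add intA (intC.const_mul (2 * α)),
      integral_const_mul, integral_const_mul, hA, hB, hC]
  -- left-hand side pieces
  have hL1 : (∫ x : EuclideanSpace ℝ (Fin N),
      (inner ℝ x (gradient u x) : ℝ) ^ 2 / ‖x‖ ^ (2 * b + 2)) = A := by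
    rw [hA]
    congr 1; funext x
    rw [my_inner_gradient, div_eq_mul_inv, ← Real.rpow_neg (norm_nonneg x)]
  have hL2 : (∫ x : EuclideanSpace ℝ (Fin N), (u x) ^ 2 / ‖x‖ ^ (2 * (b + 1))) = B := by
    rw [hB]
    congr 1; funext x
    rw [div_eq_mul_inv, ← Real.rpow_neg (norm_nonneg x),
      show -(2 * (b + 1)) = -(2 * b + 2) by ring]
  rw [hL1, hL2, hRHS, hexp, hCB]
  rw [hα]
  ring
end

section
/- Let N ≥ 1, b ∈ ℝ, t ∈ ℝ, and suppose u : ℝ^N\{0} → ℝ is C¹, not identically zero, and satisfies the ODE along rays (x/|x|)·∇u(x) = −t u(x)/|x| for all x ≠ 0 (the case a = b+1 of the minimizer equation). Then u(x) = α(x/|x|) |x|^{−t} for some function α on the unit sphere, and if t = (N−2b−2)/2 with N ≠ 2b+2, then ∫_{ℝ^N} |u(x)|²/|x|^{2(b+1)} dx = +∞. -/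
open MeasureTheory Real Filter Module
open scoped Topology Pointwise

/-! Along a ray, `f r = u (r • x)` solves `f' = -t f / r`, so `f r * r ^ t` is constant and `u` is
positively homogeneous of degree `-t`. For `t = (N - 2b - 2)/2` the integrand `u² / ‖x‖^(2b+2)` is
then homogeneous of degree `-N`, the critical degree for which the dilations `2⁻ᵏ • B` of a small
ball `B` around a point where `u ≠ 0` all carry at least the mass of `B`. These dilations are
pairwise disjoint, so the integral diverges at the origin. -/

theorem eq_rpow_mul_of_hasDerivAt {f : ℝ → ℝ} {t : ℝ}
    (hf : ∀ r, 0 < r → HasDerivAt f (-t * f r / r) r) {r : ℝ} (hr : 0 < r) :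
    f r = r ^ (-t) * f 1 := by
  have hderiv : ∀ s, 0 < s → HasDerivAt (fun s => f s * s ^ t) 0 s := by
    intro s hs
    refine ((hf s hs).mul (hasDerivAt_rpow_const (p := t) (Or.inl hs.ne'))).congr_deriv ?_
    rw [rpow_sub hs, rpow_one]
    field_simp
    ring
  have hconst : f r * r ^ t = f 1 * 1 ^ t :=
    isOpen_Ioi.is_const_of_deriv_eq_zero isPreconnected_Ioi
      (fun s hs => (hderiv s hs).differentiableAt.differentiableWithinAt)
      (fun s hs => (hderiv s hs).deriv) (Set.mem_Ioi.2 hr) (Set.mem_Ioi.2 one_pos)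
  rw [one_rpow, mul_one] at hconst
  rw [← hconst, mul_left_comm, ← rpow_add hr, neg_add_cancel, rpow_zero, mul_one]

section Gradient

variable {E : Type*} [NormedAddCommGroup E] [InnerProductSpace ℝ E] [CompleteSpace E]
  {u : E → ℝ} {t : ℝ}

theorem inner_gradient_eq_of_radial {x : E} (hx : x ≠ 0)
    (h : inner ℝ (‖x‖⁻¹ • x) (gradient u x) = -t * u x / ‖x‖) :
    inner ℝ x (gradient u x) = -t * u x := by
  have hx' : ‖x‖ ≠ 0 := norm_ne_zero_iff.2 hx
  rw [real_inner_smul_left] at h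
  field_simp at h
  linear_combination h

theorem hasDerivAt_comp_smul {x : E} {r : ℝ} (hu : DifferentiableAt ℝ u (r • x)) :
    HasDerivAt (fun s : ℝ => u (s • x)) (inner ℝ x (gradient u (r • x))) r := by
  have hline : HasDerivAt (fun s : ℝ => s • x) x r := by
    simpa using (hasDerivAt_id r).smul_const x
  refine (hu.hasFDerivAt.comp_hasDerivAt r hline).congr_deriv ?_
  rw [real_inner_comm]
  exact InnerProductSpace.toDual_symm_apply.symm

theorem apply_smul_eq_rpow_mul_of_inner_gradient (hu : ∀ x, x ≠ 0 → DifferentiableAt ℝ u x)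
    (heuler : ∀ x, x ≠ 0 → inner ℝ x (gradient u x) = -t * u x)
    {x : E} (hx : x ≠ 0) {c : ℝ} (hc : 0 < c) : u (c • x) = c ^ (-t) * u x := by
  have hray : ∀ r, 0 < r → HasDerivAt (fun s : ℝ => u (s • x)) (-t * u (r • x) / r) r := by
    intro r hr
    have hrx : r • x ≠ 0 := smul_ne_zero hr.ne' hx
    refine (hasDerivAt_comp_smul (hu _ hrx)).congr_deriv ?_
    rw [← heuler _ hrx, real_inner_smul_left]
    field_simp
  simpa using eq_rpow_mul_of_hasDerivAt hray hc

end Gradient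

section Shells

variable {E : Type*} [NormedAddCommGroup E] [NormedSpace ℝ E]

theorem norm_mem_Ioo_of_mem_smul_ball {x₀ y : E} {ε c : ℝ} (hc : 0 < c)
    (hy : y ∈ c • Metric.ball x₀ ε) : c * (‖x₀‖ - ε) < ‖y‖ ∧ ‖y‖ < c * (‖x₀‖ + ε) := by
  obtain ⟨z, hz, rfl⟩ := hy
  have hdist : |‖z‖ - ‖x₀‖| < ε :=
    (abs_norm_sub_norm_le z x₀).trans_lt (by rwa [← dist_eq_norm])
  rw [norm_smul, norm_of_nonneg hc.le]
  obtain ⟨h₁, h₂⟩ := abs_lt.1 hdist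
  constructor <;> nlinarith

theorem pairwise_disjoint_pow_smul_ball {x₀ : E} {ε : ℝ} (hε : 3 * ε ≤ ‖x₀‖) :
    Pairwise (Function.onFun Disjoint fun k : ℕ => ((2 : ℝ)⁻¹ ^ k) • Metric.ball x₀ ε) := by
  have hlt : ∀ j k : ℕ, j < k →
      Disjoint ((2 : ℝ)⁻¹ ^ j • Metric.ball x₀ ε) ((2 : ℝ)⁻¹ ^ k • Metric.ball x₀ ε) := by
    intro j k hjk
    refine Set.disjoint_left.2 fun y hyj hyk => ?_
    have hj := (norm_mem_Ioo_of_mem_smul_ball (by positivity) hyj).1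
    have hk := (norm_mem_Ioo_of_mem_smul_ball (by positivity) hyk).2
    have hpow : (2 : ℝ)⁻¹ ^ k ≤ (2 : ℝ)⁻¹ ^ j * 2⁻¹ := by
      rw [← pow_succ]; exact pow_le_pow_of_le_one (by norm_num) (by norm_num) hjk
    have hk' : (0 : ℝ) ≤ ‖x₀‖ + ε := by
      by_contra! hneg
      nlinarith [norm_nonneg y, pow_pos (by norm_num : (0 : ℝ) < 2⁻¹) k]
    nlinarith [mul_le_mul_of_nonneg_right hpow hk', pow_pos (by norm_num : (0 : ℝ) < 2⁻¹) j]
  intro j k hjk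
  rcases hjk.lt_or_gt with h | h
  exacts [hlt j k h, (hlt k j h).symm]

end Shells

theorem lintegral_eq_top_of_le_setLIntegral {α : Type*} [MeasurableSpace α] {μ : Measure α}
    {f : α → ENNReal} {A : ℕ → Set α} (hdisj : Pairwise (Function.onFun Disjoint A))
    (hA : ∀ k, MeasurableSet (A k)) {δ : ENNReal} (hδ : δ ≠ 0)
    (hle : ∀ k, δ ≤ ∫⁻ x in A k, f x ∂μ) : ∫⁻ x, f x ∂μ = ⊤ := by
  refine top_unique ?_
  calc (⊤ : ENNReal) = ∑' _ : ℕ, δ := (ENNReal.tsum_const_eq_top_of_ne_zero hδ).symm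
    _ ≤ ∑' k, ∫⁻ x in A k, f x ∂μ := ENNReal.tsum_le_tsum hle
    _ = ∫⁻ x in ⋃ k, A k, f x ∂μ := (lintegral_iUnion hA hdisj f).symm
    _ ≤ ∫⁻ x, f x ∂μ := setLIntegral_le_lintegral _ _

section Homogeneous

variable {E : Type*} [NormedAddCommGroup E] [NormedSpace ℝ E] [FiniteDimensional ℝ E]
  [MeasurableSpace E] [BorelSpace E] (μ : Measure E) [μ.IsAddHaarMeasure]

theorem le_setLIntegral_smul_of_homogeneous {F : E → ℝ}
    (hF : ∀ c, 0 < c → ∀ x, x ≠ 0 → F (c • x) = c ^ (-(finrank ℝ E : ℝ)) * F x)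
    {S : Set E} (hS : MeasurableSet S) (hS0 : ∀ x ∈ S, x ≠ 0) {m : ℝ} (hm : ∀ x ∈ S, m ≤ F x)
    {c : ℝ} (hc : 0 < c) :
    ENNReal.ofReal m * μ S ≤ ∫⁻ x in c • S, ENNReal.ofReal (F x) ∂μ := by
  have hbound : ∀ x ∈ c • S,
      ENNReal.ofReal (c ^ (-(finrank ℝ E : ℝ)) * m) ≤ ENNReal.ofReal (F x) := by
    rintro _ ⟨y, hy, rfl⟩
    rw [hF c hc y (hS0 y hy)]
    exact ENNReal.ofReal_le_ofReal (mul_le_mul_of_nonneg_left (hm y hy) (by positivity))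
  calc ENNReal.ofReal m * μ S
      = ENNReal.ofReal (c ^ (-(finrank ℝ E : ℝ)) * m) * μ (c • S) := by
        rw [Measure.addHaar_smul, abs_of_pos (by positivity), ← mul_assoc,
          ← ENNReal.ofReal_mul' (by positivity), mul_right_comm, ← rpow_natCast,
          ← rpow_add hc, neg_add_cancel, rpow_zero, one_mul]
    _ = ∫⁻ _ in c • S, ENNReal.ofReal (c ^ (-(finrank ℝ E : ℝ)) * m) ∂μ :=
        (setLIntegral_const _ _).symm
    _ ≤ ∫⁻ x in c • S, ENNReal.ofReal (F x) ∂μ :=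
        setLIntegral_mono' (hS.const_smul₀ c) hbound

theorem lintegral_ofReal_eq_top_of_homogeneous {F : E → ℝ}
    (hF : ∀ c, 0 < c → ∀ x, x ≠ 0 → F (c • x) = c ^ (-(finrank ℝ E : ℝ)) * F x)
    {x₀ : E} (hcont : ContinuousAt F x₀) (hpos : 0 < F x₀) (hx₀ : x₀ ≠ 0) :
    ∫⁻ x, ENNReal.ofReal (F x) ∂μ = ⊤ := by
  obtain ⟨ε₁, hε₁, hball⟩ :=
    Metric.eventually_nhds_iff.1 (hcont.eventually (lt_mem_nhds (half_lt_self hpos)))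
  set ε := min ε₁ (‖x₀‖ / 3)
  have hε : 0 < ε := lt_min hε₁ (by positivity)
  have hε₀ : 3 * ε ≤ ‖x₀‖ := by linarith [min_le_right ε₁ (‖x₀‖ / 3)]
  have hS0 : ∀ x ∈ Metric.ball x₀ ε, x ≠ 0 := by
    rintro x hx rfl
    rw [Metric.mem_ball, dist_zero_left] at hx
    linarith
  exact lintegral_eq_top_of_le_setLIntegral (pairwise_disjoint_pow_smul_ball hε₀)
    (fun k => Metric.isOpen_ball.measurableSet.const_smul₀ _)
    (mul_ne_zero (ENNReal.ofReal_pos.2 (half_pos hpos)).ne' (Metric.measure_ball_pos μ x₀ hε).ne')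
    (fun k => le_setLIntegral_smul_of_homogeneous μ hF Metric.isOpen_ball.measurableSet hS0
      (fun x hx => (hball (lt_of_lt_of_le hx (min_le_left _ _))).le) (by positivity))

end Homogeneous

theorem stmt_13_general (N : ℕ) (b t : ℝ)
    (u : EuclideanSpace ℝ (Fin N) → ℝ)
    (hu : ContDiffOn ℝ 1 u {x : EuclideanSpace ℝ (Fin N) | x ≠ 0})
    (hne : ∃ x : EuclideanSpace ℝ (Fin N), x ≠ 0 ∧ u x ≠ 0)
    (hode : ∀ x : EuclideanSpace ℝ (Fin N), x ≠ 0 →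
      (inner ℝ (‖x‖⁻¹ • x) (gradient u x) : ℝ) = -t * u x / ‖x‖) :
    (∃ α : EuclideanSpace ℝ (Fin N) → ℝ,
      ∀ x : EuclideanSpace ℝ (Fin N), x ≠ 0 → u x = α (‖x‖⁻¹ • x) * ‖x‖ ^ (-t))
    ∧ (t = ((N : ℝ) - 2 * b - 2) / 2 → (N : ℝ) ≠ 2 * b + 2 →
      ∫⁻ x : EuclideanSpace ℝ (Fin N),
        ENNReal.ofReal ((u x) ^ 2 / ‖x‖ ^ (2 * (b + 1))) = ⊤) := by
  have hdiff : ∀ x, x ≠ 0 → DifferentiableAt ℝ u x := fun x hx =>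
    (hu.differentiableOn one_ne_zero).differentiableAt (isOpen_ne.mem_nhds hx)
  have hhom : ∀ x, x ≠ 0 → ∀ c : ℝ, 0 < c → u (c • x) = c ^ (-t) * u x := fun x hx c hc =>
    apply_smul_eq_rpow_mul_of_inner_gradient hdiff
      (fun y hy => inner_gradient_eq_of_radial hy (hode y hy)) hx hc
  refine ⟨⟨u, fun x hx => ?_⟩, fun ht _ => ?_⟩
  · have hx' : 0 < ‖x‖ := norm_pos_iff.2 hx
    rw [mul_comm, ← hhom _ (smul_ne_zero (inv_ne_zero hx'.ne') hx) _ hx', smul_inv_smul₀ hx'.ne']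
  obtain ⟨x₀, hx₀, hux₀⟩ := hne
  refine lintegral_ofReal_eq_top_of_homogeneous volume (fun c hc x hx => ?_) ?_ ?_ hx₀
  · have hx' : 0 < ‖x‖ := norm_pos_iff.2 hx
    rw [hhom x hx c hc, norm_smul, norm_of_nonneg hc.le, mul_rpow hc.le hx'.le,
      finrank_euclideanSpace_fin, mul_pow, ← rpow_natCast (c ^ (-t)), ← rpow_mul hc.le,
      mul_div_mul_comm, ← rpow_sub hc, ht]
    ring_nf
  · exact ((hdiff x₀ hx₀).continuousAt.pow 2).div
      (continuous_norm.continuousAt.rpow_const (Or.inl (norm_ne_zero_iff.2 hx₀)))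
      (rpow_pos_of_pos (norm_pos_iff.2 hx₀) _).ne'
  · exact div_pos (pow_two_pos_of_ne_zero hux₀) (rpow_pos_of_pos (norm_pos_iff.2 hx₀) _)

theorem stmt_13 (N : ℕ) (hN : 1 ≤ N) (b t : ℝ)
    (u : EuclideanSpace ℝ (Fin N) → ℝ)
    (hu : ContDiffOn ℝ 1 u {x : EuclideanSpace ℝ (Fin N) | x ≠ 0})
    (hne : ∃ x : EuclideanSpace ℝ (Fin N), x ≠ 0 ∧ u x ≠ 0)
    (hode : ∀ x : EuclideanSpace ℝ (Fin N), x ≠ 0 →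
      (inner ℝ (‖x‖⁻¹ • x) (gradient u x) : ℝ) = -t * u x / ‖x‖) :
    (∃ α : EuclideanSpace ℝ (Fin N) → ℝ,
      ∀ x : EuclideanSpace ℝ (Fin N), x ≠ 0 → u x = α (‖x‖⁻¹ • x) * ‖x‖ ^ (-t))
    ∧ (t = ((N : ℝ) - 2 * b - 2) / 2 → (N : ℝ) ≠ 2 * b + 2 →
      ∫⁻ x : EuclideanSpace ℝ (Fin N),
        ENNReal.ofReal ((u x) ^ 2 / ‖x‖ ^ (2 * (b + 1))) = ⊤) :=
  stmt_13_general N b t u hu hne hode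
end

section
/- Let N ≥ 1 and b ∈ ℝ with N ≠ 2(b+1). For small ε > 0 define u_ε(x) = |x|^{−(N−2b−2)/2} φ_ε(x), where φ_ε is a Lipschitz cutoff equal to 1 for ε ≤ |x| ≤ 1/ε, equal to log(|x|/ε²)/log(1/ε) for ε² ≤ |x| ≤ ε, equal to log(ε|x|)/log(1/ε) for 1/ε ≤ |x| ≤ 1/ε², and 0 otherwise. Then as ε → 0: ∫ |∂_r(u_ε |x|^{(N−2b−2)/2})|² |x|^{2−N} dx = O((log(1/ε))^{−1}) and ∫ |u_ε|²/|x|^{2(b+1)} dx ≥ c·log(1/ε) for some c > 0. Consequently the ratio ∫|x·∇u_ε|²/|x|^{2b+2} dx ÷ ∫|u_ε|²/|x|^{2b+2} dx converges to (N−2(b+1))²/4, so (N−2(b+1))²/4 is the sharp constant in the weighted Hardy inequality. -/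
open MeasureTheory Real Filter
open scoped Topology

/-!
All functions involved are radial, and the weights are critical: in polar coordinates each of
the three integrals becomes `∫₀^∞ Q (ψ r) (r ψ'(r)) dr / r`, where `ψ` is the profile of `φ_ε` and
`Q s d` is `d ^ 2`, `s ^ 2` or `(p s + d) ^ 2` with `p = -(N - 2b - 2) / 2`. In the variable `log r`
the profile consists of two ramps of length `L = log (1/ε)` and slope `1/L` and a plateau of
length `2L`; it is smooth off four radii, whose spheres are null. The integrals are therefore
`|S^{N-1}|` times `2/L`, `8L/3` and `8p²L/3 + 2p + 2/L`, and the Rayleigh quotient tends to `p²`.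
-/

open Set Module

section RadialCalculus

variable {E : Type*} [NormedAddCommGroup E] [InnerProductSpace ℝ E]

theorem hasFDerivAt_norm {x : E} (hx : x ≠ 0) :
    HasFDerivAt (fun y : E => ‖y‖) (‖x‖⁻¹ • innerSL ℝ x) x := by
  have hsqrt := (hasStrictFDerivAt_norm_sq x).hasFDerivAt.sqrt (by positivity)
  simp only [sqrt_sq (norm_nonneg _)] at hsqrt
  convert hsqrt using 1
  ext v
  simp only [_root_.smul_apply, coe_innerSL_apply, smul_eq_mul, nsmul_eq_mul,
    Nat.cast_ofNat]
  field_simp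

theorem fderiv_comp_norm_apply {G : ℝ → ℝ} {x : E} (hx : x ≠ 0)
    (hG : DifferentiableAt ℝ G ‖x‖) (v : E) :
    fderiv ℝ (fun y => G ‖y‖) x v = deriv G ‖x‖ * (inner ℝ x v / ‖x‖) := by
  have hGn : HasFDerivAt (fun y => G ‖y‖) (deriv G ‖x‖ • ‖x‖⁻¹ • innerSL ℝ x) x :=
    hG.hasDerivAt.comp_hasFDerivAt x (hasFDerivAt_norm hx)
  rw [hGn.fderiv]
  simp only [_root_.smul_apply, coe_innerSL_apply, smul_eq_mul]
  ring

end RadialCalculus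

theorem integral_eq_integral_Ioi_of_eq_comp_norm {E : Type*} [NormedAddCommGroup E]
    [InnerProductSpace ℝ E] [FiniteDimensional ℝ E] [Nontrivial E] [MeasurableSpace E]
    [BorelSpace E] (μ : Measure E) [μ.IsAddHaarMeasure] {F : E → ℝ} {H : ℝ → ℝ} {s : Set ℝ}
    (hs : s.Countable) (hF : ∀ x, ‖x‖ ∉ s → F x = H ‖x‖) :
    ∫ x, F x ∂μ = finrank ℝ E * μ.real (Metric.ball 0 1) *
      ∫ r in Ioi 0, r ^ (finrank ℝ E - 1) * H r := by
  have hnull : ∀ᵐ x ∂μ, ‖x‖ ∉ s := by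
    rw [ae_iff]
    simp only [not_not]
    have : {x : E | ‖x‖ ∈ s} = ⋃ r ∈ s, Metric.sphere 0 r := by ext; simp
    rw [this, measure_biUnion_null_iff hs]
    exact fun r _ => Measure.addHaar_sphere μ 0 r
  rw [integral_congr_ae (hnull.mono hF), integral_fun_norm_addHaar μ H]
  simp only [nsmul_eq_mul, smul_eq_mul, mul_assoc]

theorem Set.EqOn.hasDerivAt_of_isOpen {f g : ℝ → ℝ} {U : Set ℝ} (h : EqOn f g U) (hU : IsOpen U)
    {r g' : ℝ} (hr : r ∈ U) (hg : HasDerivAt g g' r) : HasDerivAt f g' r :=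
  hg.congr_of_eventuallyEq (h.eventuallyEq_of_mem (hU.mem_nhds hr))

theorem hasDerivAt_log_div_div {a L r : ℝ} (ha : a ≠ 0) (hr : r ≠ 0) :
    HasDerivAt (fun r => log (r / a) / L) (r⁻¹ / L) r := by
  refine (((hasDerivAt_id' r).div_const a).log (div_ne_zero hr ha)).div_const L |>.congr_deriv ?_
  field_simp

theorem integral_comp_log_div_div {g : ℝ → ℝ} {a b L : ℝ} (ha : 0 < a) (hab : a < b)
    (hL : log (b / a) = L) (hg : Continuous g) :
    ∫ r in a..b, g (log (r / a) / L) / r = L * ∫ s in (0 : ℝ)..1, g s := by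
  have hL₀ : L ≠ 0 := hL ▸ (log_pos ((one_lt_div ha).2 hab)).ne'
  have hpos : ∀ r ∈ uIcc a b, 0 < r := fun r hr => ha.trans_le (uIcc_of_le hab.le ▸ hr).1
  have hcov := intervalIntegral.integral_comp_mul_deriv
    (fun r hr => hasDerivAt_log_div_div ha.ne' (hpos r hr).ne')
    ((continuousOn_inv₀.mono fun r hr => (hpos r hr).ne').div_const L) hg
  simp only [Function.comp_def, div_self ha.ne', log_one, zero_div, hL, div_self hL₀] at hcov
  rw [← hcov, ← intervalIntegral.integral_const_mul]
  refine intervalIntegral.integral_congr fun r _ => ?_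
  field_simp

theorem integral_Ioi_eq_of_eqOn_Ioo {f g₁ g₂ g₃ : ℝ → ℝ} {a b c d : ℝ} (ha : 0 < a)
    (hab : a ≤ b) (hbc : b ≤ c) (hcd : c ≤ d) (hf : ∀ r ∈ Ioi 0 \ Icc a d, f r = 0)
    (h₁ : EqOn f g₁ (Ioo a b)) (h₂ : EqOn f g₂ (Ioo b c)) (h₃ : EqOn f g₃ (Ioo c d))
    (hg₁ : ContinuousOn g₁ (Icc a b)) (hg₂ : ContinuousOn g₂ (Icc b c))
    (hg₃ : ContinuousOn g₃ (Icc c d)) :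
    ∫ r in Ioi 0, f r = (∫ r in a..b, g₁ r) + (∫ r in b..c, g₂ r) + ∫ r in c..d, g₃ r := by
  have hi₁ : IntervalIntegrable f volume a b :=
    (hg₁.intervalIntegrable_of_Icc hab).congr_uIoo (uIoo_of_le hab ▸ h₁.symm)
  have hi₂ : IntervalIntegrable f volume b c :=
    (hg₂.intervalIntegrable_of_Icc hbc).congr_uIoo (uIoo_of_le hbc ▸ h₂.symm)
  have hi₃ : IntervalIntegrable f volume c d :=
    (hg₃.intervalIntegrable_of_Icc hcd).congr_uIoo (uIoo_of_le hcd ▸ h₃.symm)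
  rw [setIntegral_eq_of_subset_of_forall_sdiff_eq_zero measurableSet_Ioi
      (fun r hr => ha.trans_le hr.1) hf, integral_Icc_eq_integral_Ioc,
    ← intervalIntegral.integral_of_le ((hab.trans hbc).trans hcd),
    ← intervalIntegral.integral_add_adjacent_intervals (hi₁.trans hi₂) hi₃,
    ← intervalIntegral.integral_add_adjacent_intervals hi₁ hi₂,
    intervalIntegral.integral_congr_Ioo_of_le hab h₁,
    intervalIntegral.integral_congr_Ioo_of_le hbc h₂,
    intervalIntegral.integral_congr_Ioo_of_le hcd h₃]

noncomputable def cutoffProfile (ε r : ℝ) : ℝ :=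
  if ε ≤ r ∧ r ≤ 1 / ε then 1
  else if ε ^ 2 ≤ r ∧ r ≤ ε then log (r / ε ^ 2) / log (1 / ε)
  else if 1 / ε ≤ r ∧ r ≤ 1 / ε ^ 2 then log (ε * r) / log (1 / ε)
  else 0

section CutoffProfile

variable {ε : ℝ}

theorem sq_lt_self_lt_one_div_lt_one_div_sq (hε₀ : 0 < ε) (hε₁ : ε < 1) :
    ε ^ 2 < ε ∧ ε < 1 / ε ∧ 1 / ε < 1 / ε ^ 2 := by
  refine ⟨by nlinarith, ?_, ?_⟩
  · rw [lt_div_iff₀ hε₀]; nlinarith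
  · rw [div_lt_div_iff₀ hε₀ (by positivity)]; nlinarith

theorem cutoffProfile_eqOn_Iio (hε₀ : 0 < ε) (hε₁ : ε < 1) :
    EqOn (cutoffProfile ε) (fun _ => 0) (Iio (ε ^ 2)) := by
  obtain ⟨h₁, h₂, h₃⟩ := sq_lt_self_lt_one_div_lt_one_div_sq hε₀ hε₁
  intro r (hr : r < _)
  unfold cutoffProfile
  split_ifs <;> first | rfl | grind

theorem cutoffProfile_eqOn_inner (hε₀ : 0 < ε) (hε₁ : ε < 1) :
    EqOn (cutoffProfile ε) (fun r => log (r / ε ^ 2) / log (1 / ε)) (Ioo (ε ^ 2) ε) := by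
  obtain ⟨h₁, h₂, h₃⟩ := sq_lt_self_lt_one_div_lt_one_div_sq hε₀ hε₁
  intro r ⟨hr₁, hr₂⟩
  unfold cutoffProfile
  split_ifs <;> first | rfl | grind

theorem cutoffProfile_eqOn_middle (hε₀ : 0 < ε) (hε₁ : ε < 1) :
    EqOn (cutoffProfile ε) (fun _ => 1) (Ioo ε (1 / ε)) := by
  obtain ⟨h₁, h₂, h₃⟩ := sq_lt_self_lt_one_div_lt_one_div_sq hε₀ hε₁
  intro r ⟨hr₁, hr₂⟩
  unfold cutoffProfile
  split_ifs <;> first | rfl | grind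

theorem cutoffProfile_eqOn_outer (hε₀ : 0 < ε) (hε₁ : ε < 1) :
    EqOn (cutoffProfile ε) (fun r => log (r / (1 / ε)) / log (1 / ε))
      (Ioo (1 / ε) (1 / ε ^ 2)) := by
  obtain ⟨h₁, h₂, h₃⟩ := sq_lt_self_lt_one_div_lt_one_div_sq hε₀ hε₁
  intro r ⟨hr₁, hr₂⟩
  unfold cutoffProfile
  split_ifs <;> first | rw [div_one_div, mul_comm] | grind

theorem cutoffProfile_eqOn_Ioi (hε₀ : 0 < ε) (hε₁ : ε < 1) :
    EqOn (cutoffProfile ε) (fun _ => 0) (Ioi (1 / ε ^ 2)) := by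
  obtain ⟨h₁, h₂, h₃⟩ := sq_lt_self_lt_one_div_lt_one_div_sq hε₀ hε₁
  intro r (hr : _ < r)
  unfold cutoffProfile
  split_ifs <;> first | rfl | grind

theorem cutoffProfile_differentiableAt {r : ℝ} (hε₀ : 0 < ε) (hε₁ : ε < 1)
    (hr : r ∉ ({ε ^ 2, ε, 1 / ε, 1 / ε ^ 2} : Set ℝ)) :
    DifferentiableAt ℝ (cutoffProfile ε) r := by
  simp only [mem_insert_iff, mem_singleton_iff, not_or] at hr
  obtain ⟨h₁, h₂, h₃, h₄⟩ := hr
  rcases lt_or_gt_of_ne h₁ with hr₁ | hr₁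
  · exact ((cutoffProfile_eqOn_Iio hε₀ hε₁).hasDerivAt_of_isOpen isOpen_Iio hr₁
      (hasDerivAt_const r 0)).differentiableAt
  have hr₀ : r ≠ 0 := ((pow_pos hε₀ 2).trans hr₁).ne'
  rcases lt_or_gt_of_ne h₂ with hr₂ | hr₂
  · exact ((cutoffProfile_eqOn_inner hε₀ hε₁).hasDerivAt_of_isOpen isOpen_Ioo ⟨hr₁, hr₂⟩
      (hasDerivAt_log_div_div (by positivity) hr₀)).differentiableAt
  rcases lt_or_gt_of_ne h₃ with hr₃ | hr₃
  · exact ((cutoffProfile_eqOn_middle hε₀ hε₁).hasDerivAt_of_isOpen isOpen_Ioo ⟨hr₂, hr₃⟩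
      (hasDerivAt_const r 1)).differentiableAt
  rcases lt_or_gt_of_ne h₄ with hr₄ | hr₄
  · exact ((cutoffProfile_eqOn_outer hε₀ hε₁).hasDerivAt_of_isOpen isOpen_Ioo ⟨hr₃, hr₄⟩
      (hasDerivAt_log_div_div (by positivity) hr₀)).differentiableAt
  · exact ((cutoffProfile_eqOn_Ioi hε₀ hε₁).hasDerivAt_of_isOpen isOpen_Ioi hr₄
      (hasDerivAt_const r 0)).differentiableAt

theorem integral_cutoffProfile (hε₀ : 0 < ε) (hε₁ : ε < 1) {Q : ℝ → ℝ → ℝ} (hQ₀ : Q 0 0 = 0)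
    (hQ : Continuous fun s => Q s (log (1 / ε))⁻¹) :
    ∫ r in Ioi 0, Q (cutoffProfile ε r) (r * deriv (cutoffProfile ε) r) / r
      = 2 * log (1 / ε) * ((∫ s in (0 : ℝ)..1, Q s (log (1 / ε))⁻¹) + Q 1 0) := by
  obtain ⟨h₁, h₂, h₃⟩ := sq_lt_self_lt_one_div_lt_one_div_sq hε₀ hε₁
  set L := log (1 / ε)
  have hε₂ : 0 < ε ^ 2 := by positivity
  have flat : ∀ {U : Set ℝ} {c : ℝ}, IsOpen U → EqOn (cutoffProfile ε) (fun _ => c) U →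
      EqOn (fun r => Q (cutoffProfile ε r) (r * deriv (cutoffProfile ε) r) / r)
        (fun r => Q c 0 / r) U := by
    intro U c hU h r hr
    simp only [h hr, (h.hasDerivAt_of_isOpen hU hr (hasDerivAt_const r c)).deriv, mul_zero]
  have ramp : ∀ {a b : ℝ}, 0 < a → EqOn (cutoffProfile ε) (fun r => log (r / a) / L) (Ioo a b) →
      EqOn (fun r => Q (cutoffProfile ε r) (r * deriv (cutoffProfile ε) r) / r)
        (fun r => Q (log (r / a) / L) L⁻¹ / r) (Ioo a b) := by
    intro a b ha h r hr
    have hr₀ : r ≠ 0 := (ha.trans hr.1).ne'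
    have hderiv := h.hasDerivAt_of_isOpen isOpen_Ioo hr (hasDerivAt_log_div_div ha.ne' hr₀)
    simp only [h hr, hderiv.deriv]
    field_simp
  have ramp_cont : ∀ {a b : ℝ}, 0 < a →
      ContinuousOn (fun r => Q (log (r / a) / L) L⁻¹ / r) (Icc a b) := by
    intro a b ha
    fun_prop (disch := intros; grind)
  rw [integral_Ioi_eq_of_eqOn_Ioo hε₂ h₁.le h₂.le h₃.le ?vanish
      (ramp hε₂ (cutoffProfile_eqOn_inner hε₀ hε₁))
      (flat isOpen_Ioo (cutoffProfile_eqOn_middle hε₀ hε₁))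
      (ramp (hε₀.trans h₂) (cutoffProfile_eqOn_outer hε₀ hε₁))
      (ramp_cont hε₂) (by fun_prop (disch := intros; grind)) (ramp_cont (hε₀.trans h₂)),
    integral_comp_log_div_div hε₂ h₁ (by congr 1; field_simp) hQ,
    integral_comp_log_div_div (hε₀.trans h₂) h₃ (by congr 1; field_simp) hQ]
  · have hplateau : ∫ r in ε..1 / ε, Q 1 0 / r = Q 1 0 * (2 * L) := by
      simp_rw [div_eq_mul_inv (Q 1 0)]
      rw [intervalIntegral.integral_const_mul, integral_inv_of_pos hε₀ (hε₀.trans h₂),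
        show 1 / ε / ε = (1 / ε) ^ 2 by ring, log_pow]
      push_cast
      ring
    rw [hplateau]
    ring
  · rintro r ⟨-, hr⟩
    rcases not_and_or.1 hr with hr | hr
    · exact (flat isOpen_Iio (cutoffProfile_eqOn_Iio hε₀ hε₁) (not_le.1 hr)).trans (by simp [hQ₀])
    · exact (flat isOpen_Ioi (cutoffProfile_eqOn_Ioi hε₀ hε₁) (not_le.1 hr)).trans (by simp [hQ₀])

end CutoffProfile

theorem integral_mul_add_sq_zero_one (p c : ℝ) :
    ∫ s in (0 : ℝ)..1, (p * s + c) ^ 2 = p ^ 2 / 3 + p * c + c ^ 2 := by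
  have : (fun s : ℝ => (p * s + c) ^ 2) = fun s => p ^ 2 * s ^ 2 + 2 * p * c * s + c ^ 2 := by
    ext s; ring
  rw [this, intervalIntegral.integral_add, intervalIntegral.integral_add,
    intervalIntegral.integral_const_mul, intervalIntegral.integral_const_mul, integral_pow,
    integral_id, intervalIntegral.integral_const]
  · simp only [Nat.reduceAdd, one_pow, ne_eq, OfNat.ofNat_ne_zero, not_false_eq_true, zero_pow,
      sub_zero, Nat.cast_ofNat, one_div, smul_eq_mul, one_mul, add_left_inj]
    ring
  all_goals exact Continuous.intervalIntegrable (by fun_prop) _ _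

section RadialCutoff

variable {E : Type*} [NormedAddCommGroup E] [InnerProductSpace ℝ E] [FiniteDimensional ℝ E]
  [Nontrivial E] [MeasurableSpace E] [BorelSpace E] (μ : Measure E) [μ.IsAddHaarMeasure]
  {ε : ℝ}

theorem integral_eq_of_eq_cutoffProfile (hε₀ : 0 < ε) (hε₁ : ε < 1) {F : E → ℝ}
    {Q : ℝ → ℝ → ℝ} (hQ₀ : Q 0 0 = 0) (hQ : Continuous fun s => Q s (log (1 / ε))⁻¹)
    (hF : ∀ x : E, x ≠ 0 → DifferentiableAt ℝ (cutoffProfile ε) ‖x‖ →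
      F x = Q (cutoffProfile ε ‖x‖) (‖x‖ * deriv (cutoffProfile ε) ‖x‖) / ‖x‖ ^ finrank ℝ E) :
    ∫ x, F x ∂μ = finrank ℝ E * μ.real (Metric.ball 0 1) *
      (2 * log (1 / ε) * ((∫ s in (0 : ℝ)..1, Q s (log (1 / ε))⁻¹) + Q 1 0)) := by
  rw [integral_eq_integral_Ioi_of_eq_comp_norm μ
      (H := fun r => Q (cutoffProfile ε r) (r * deriv (cutoffProfile ε) r) / r ^ finrank ℝ E)
      (s := {0, ε ^ 2, ε, 1 / ε, 1 / ε ^ 2}) (toFinite _).countable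
      (fun x hx => hF x (norm_ne_zero_iff.1 fun h => hx (h ▸ mem_insert _ _))
        (cutoffProfile_differentiableAt hε₀ hε₁ fun h => hx (mem_insert_of_mem _ h))),
    ← integral_cutoffProfile hε₀ hε₁ hQ₀ hQ]
  congr 1
  refine setIntegral_congr_fun measurableSet_Ioi fun r (hr : 0 < r) => ?_
  rw [pow_sub₀ r hr.ne' finrank_pos, pow_one]
  field_simp

variable {n : ℕ} (hn : finrank ℝ E = n)
include hn

theorem integral_fderiv_radial_cutoffProfile_sq (hε₀ : 0 < ε) (hε₁ : ε < 1) :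
    ∫ x, (fderiv ℝ (fun y => cutoffProfile ε ‖y‖) x (‖x‖⁻¹ • x)) ^ 2 * ‖x‖ ^ ((2 : ℝ) - n) ∂μ
      = n * μ.real (Metric.ball 0 1) * (2 * (log (1 / ε))⁻¹) := by
  subst hn
  have hL : 0 < log (1 / ε) := log_pos (one_lt_one_div hε₀ hε₁)
  rw [integral_eq_of_eq_cutoffProfile μ hε₀ hε₁ (Q := fun _ d => d ^ 2) (by simp) (by fun_prop)]
  · simp only [intervalIntegral.integral_const, sub_zero, one_smul, ne_eq, OfNat.ofNat_ne_zero,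
      not_false_eq_true, zero_pow, add_zero]
    generalize log (1 / ε) = L at hL ⊢
    field_simp
  intro x hx hdiff
  have hr : 0 < ‖x‖ := norm_pos_iff.2 hx
  rw [fderiv_comp_norm_apply hx hdiff, real_inner_smul_right, real_inner_self_eq_norm_sq,
    rpow_sub hr, rpow_two, rpow_natCast]
  field_simp

theorem integral_rpow_mul_cutoffProfile_sq_div (hε₀ : 0 < ε) (hε₁ : ε < 1) {p q : ℝ}
    (hq : q = 2 * p + n) :
    ∫ x, (‖x‖ ^ p * cutoffProfile ε ‖x‖) ^ 2 / ‖x‖ ^ q ∂μ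
      = n * μ.real (Metric.ball 0 1) * (8 / 3 * log (1 / ε)) := by
  subst hn
  rw [integral_eq_of_eq_cutoffProfile μ hε₀ hε₁ (Q := fun s _ => s ^ 2) (by simp) (by fun_prop)]
  · simp only [integral_pow]
    ring
  intro x hx _
  have hr : 0 < ‖x‖ := norm_pos_iff.2 hx
  rw [hq, rpow_add hr, mul_comm 2 p, rpow_mul hr.le, rpow_natCast, rpow_two]
  field_simp

theorem integral_fderiv_rpow_mul_cutoffProfile_sq_div (hε₀ : 0 < ε) (hε₁ : ε < 1) {p q : ℝ}
    (hq : q = 2 * p + n) :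
    ∫ x, (fderiv ℝ (fun y => ‖y‖ ^ p * cutoffProfile ε ‖y‖) x x) ^ 2 / ‖x‖ ^ q ∂μ
      = n * μ.real (Metric.ball 0 1) *
        (8 / 3 * p ^ 2 * log (1 / ε) + 2 * p + 2 * (log (1 / ε))⁻¹) := by
  subst hn
  have hL : 0 < log (1 / ε) := log_pos (one_lt_one_div hε₀ hε₁)
  rw [integral_eq_of_eq_cutoffProfile μ hε₀ hε₁ (Q := fun s d => (p * s + d) ^ 2) (by simp)
    (by fun_prop), integral_mul_add_sq_zero_one]
  · field_simp
    ring
  intro x hx hdiff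
  have hr : 0 < ‖x‖ := norm_pos_iff.2 hx
  have hG : HasDerivAt (fun r => r ^ p * cutoffProfile ε r)
      (p * ‖x‖ ^ (p - 1) * cutoffProfile ε ‖x‖ + ‖x‖ ^ p * deriv (cutoffProfile ε) ‖x‖) ‖x‖ :=
    (hasDerivAt_rpow_const (Or.inl hr.ne')).mul hdiff.hasDerivAt
  rw [fderiv_comp_norm_apply hx hG.differentiableAt x, hG.deriv, real_inner_self_eq_norm_sq, hq,
    rpow_add hr, mul_comm 2 p, rpow_mul hr.le, rpow_natCast, rpow_two, rpow_sub_one hr.ne']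
  field_simp

end RadialCutoff

theorem tendsto_rayleigh_quotient_atTop (p : ℝ) :
    Tendsto (fun L : ℝ => (8 / 3 * p ^ 2 * L + 2 * p + 2 * L⁻¹) / (8 / 3 * L)) atTop
      (𝓝 (p ^ 2)) := by
  have h := ((tendsto_inv_atTop_zero.const_mul (3 / 4 * p)).add
    ((tendsto_inv_atTop_zero.pow 2).const_mul (3 / 4))).const_add (p ^ 2)
  simp only [mul_zero, add_zero, zero_pow two_ne_zero] at h
  refine h.congr' ((eventually_gt_atTop 0).mono fun L hL => ?_)
  field_simp
  ring

theorem stmt_14_general (N : ℕ) (hN : 1 ≤ N) (b : ℝ)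
    (φ : ℝ → EuclideanSpace ℝ (Fin N) → ℝ)
    (hφ : ∀ ε : ℝ, ∀ x : EuclideanSpace ℝ (Fin N),
      φ ε x = if ε ≤ ‖x‖ ∧ ‖x‖ ≤ 1 / ε then 1
        else if ε ^ 2 ≤ ‖x‖ ∧ ‖x‖ ≤ ε then Real.log (‖x‖ / ε ^ 2) / Real.log (1 / ε)
        else if 1 / ε ≤ ‖x‖ ∧ ‖x‖ ≤ 1 / ε ^ 2 then
          Real.log (ε * ‖x‖) / Real.log (1 / ε)
        else 0)
    (uε : ℝ → EuclideanSpace ℝ (Fin N) → ℝ)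
    (huε : ∀ ε : ℝ, ∀ x : EuclideanSpace ℝ (Fin N),
      uε ε x = ‖x‖ ^ (-((N : ℝ) - 2 * b - 2) / 2) * φ ε x) :
    (∃ C > (0 : ℝ), ∀ ε ∈ Set.Ioo (0 : ℝ) 1,
      ∫ x : EuclideanSpace ℝ (Fin N),
          (fderiv ℝ (φ ε) x (‖x‖⁻¹ • x)) ^ 2 * ‖x‖ ^ ((2 : ℝ) - N)
        ≤ C * (Real.log (1 / ε))⁻¹)
    ∧ (∃ c > (0 : ℝ), ∀ ε ∈ Set.Ioo (0 : ℝ) 1,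
      c * Real.log (1 / ε)
        ≤ ∫ x : EuclideanSpace ℝ (Fin N), (uε ε x) ^ 2 / ‖x‖ ^ (2 * (b + 1)))
    ∧ Tendsto (fun ε : ℝ =>
        (∫ x : EuclideanSpace ℝ (Fin N),
            (fderiv ℝ (uε ε) x x) ^ 2 / ‖x‖ ^ (2 * b + 2)) /
          ∫ x : EuclideanSpace ℝ (Fin N), (uε ε x) ^ 2 / ‖x‖ ^ (2 * b + 2))
        (𝓝[>] 0) (𝓝 (((N : ℝ) - 2 * (b + 1)) ^ 2 / 4)) := by
  have hdim : finrank ℝ (EuclideanSpace ℝ (Fin N)) = N := finrank_euclideanSpace_fin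
  have : Nontrivial (EuclideanSpace ℝ (Fin N)) :=
    nontrivial_of_finrank_pos (R := ℝ) (by rw [hdim]; omega)
  set K := (N : ℝ) * volume.real (Metric.ball (0 : EuclideanSpace ℝ (Fin N)) 1)
  have hK : 0 < K := mul_pos (by exact_mod_cast hN)
    (ENNReal.toReal_pos (Metric.measure_ball_pos _ _ one_pos).ne' measure_ball_lt_top.ne)
  set p := -((N : ℝ) - 2 * b - 2) / 2
  have hq : 2 * (b + 1) = 2 * p + N := by ring
  have hφ' : ∀ ε, φ ε = fun x => cutoffProfile ε ‖x‖ := fun ε => funext (hφ ε)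
  have huε' : ∀ ε, uε ε = fun x => ‖x‖ ^ p * cutoffProfile ε ‖x‖ := fun ε =>
    funext fun x => by rw [huε, hφ']
  refine ⟨⟨2 * K, by positivity, fun ε hε => le_of_eq ?_⟩,
    ⟨8 / 3 * K, by positivity, fun ε hε => le_of_eq ?_⟩, ?_⟩
  · rw [hφ', integral_fderiv_radial_cutoffProfile_sq volume hdim hε.1 hε.2]
    ring
  · rw [huε', integral_rpow_mul_cutoffProfile_sq_div volume hdim hε.1 hε.2 hq]
    ring
  have hlog : Tendsto (fun ε : ℝ => log (1 / ε)) (𝓝[>] 0) atTop :=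
    (tendsto_log_atTop.comp tendsto_inv_nhdsGT_zero).congr fun ε => by
      rw [Function.comp_apply, one_div]
  rw [show ((N : ℝ) - 2 * (b + 1)) ^ 2 / 4 = p ^ 2 by ring]
  refine ((tendsto_rayleigh_quotient_atTop p).comp hlog).congr' ?_
  filter_upwards [Ioo_mem_nhdsGT one_pos] with ε hε
  rw [huε', show 2 * b + 2 = 2 * (b + 1) by ring,
    integral_fderiv_rpow_mul_cutoffProfile_sq_div volume hdim hε.1 hε.2 hq,
    integral_rpow_mul_cutoffProfile_sq_div volume hdim hε.1 hε.2 hq, mul_div_mul_left _ _ hK.ne']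
  rfl

theorem stmt_14 (N : ℕ) (hN : 1 ≤ N) (b : ℝ) (hb : (N : ℝ) ≠ 2 * (b + 1))
    (φ : ℝ → EuclideanSpace ℝ (Fin N) → ℝ)
    (hφ : ∀ ε : ℝ, ∀ x : EuclideanSpace ℝ (Fin N),
      φ ε x = if ε ≤ ‖x‖ ∧ ‖x‖ ≤ 1 / ε then 1
        else if ε ^ 2 ≤ ‖x‖ ∧ ‖x‖ ≤ ε then Real.log (‖x‖ / ε ^ 2) / Real.log (1 / ε)
        else if 1 / ε ≤ ‖x‖ ∧ ‖x‖ ≤ 1 / ε ^ 2 then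
          Real.log (ε * ‖x‖) / Real.log (1 / ε)
        else 0)
    (uε : ℝ → EuclideanSpace ℝ (Fin N) → ℝ)
    (huε : ∀ ε : ℝ, ∀ x : EuclideanSpace ℝ (Fin N),
      uε ε x = ‖x‖ ^ (-((N : ℝ) - 2 * b - 2) / 2) * φ ε x) :
    (∃ C > (0 : ℝ), ∀ ε ∈ Set.Ioo (0 : ℝ) 1,
      ∫ x : EuclideanSpace ℝ (Fin N),
          (fderiv ℝ (φ ε) x (‖x‖⁻¹ • x)) ^ 2 * ‖x‖ ^ ((2 : ℝ) - N)
        ≤ C * (Real.log (1 / ε))⁻¹)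
    ∧ (∃ c > (0 : ℝ), ∀ ε ∈ Set.Ioo (0 : ℝ) 1,
      c * Real.log (1 / ε)
        ≤ ∫ x : EuclideanSpace ℝ (Fin N), (uε ε x) ^ 2 / ‖x‖ ^ (2 * (b + 1)))
    ∧ Tendsto (fun ε : ℝ =>
        (∫ x : EuclideanSpace ℝ (Fin N),
            (fderiv ℝ (uε ε) x x) ^ 2 / ‖x‖ ^ (2 * b + 2)) /
          ∫ x : EuclideanSpace ℝ (Fin N), (uε ε x) ^ 2 / ‖x‖ ^ (2 * b + 2))
        (𝓝[>] 0) (𝓝 (((N : ℝ) - 2 * (b + 1)) ^ 2 / 4)) :=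
  stmt_14_general N hN b φ hφ uε huε
end
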